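/- arXiv:1211.2463 — 2 statements merged into one kernel-verified Lean document; each statement's English description precedes it below -/
import Mathlib

section
/- (Weighted Sobolev embedding) Let 3 < α < 5, let w be a Lane-Emden enthalpy profile, let β > 0 be real with ceiling ⌈β⌉, and let m ≥ 0 be an integer with ⌈β⌉ + m ≥ 2. Then there exists a constant C > 0 (depending on w, β, m but not on u) such that for every smooth u : (0,R) → ℝ with finite right-hand side: Σ_{l=0}^{m} ∫₀^R |(∂_r^l u)(r)|² dr ≤ C Σ_{k=0}^{⌈β⌉+2m} ∫₀^R w^{β+k} r⁴ |(∂_r^k u)(r)|² dr; in particular u belongs to the Sobolev space H^m(0,R). -/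
open MeasureTheory Real Filter Set Topology intervalIntegral



lemma iter_contDiffOn {u : ℝ → ℝ} {s : Set ℝ} (hs : IsOpen s)
    (hu : ContDiffOn ℝ (⊤ : ℕ∞) u s) (k : ℕ) : ContDiffOn ℝ (⊤ : ℕ∞) (iteratedDeriv k u) s := by
  induction k with
  | zero => simpa [iteratedDeriv_zero] using hu
  | succ n ih =>
      rw [iteratedDeriv_succ]
      exact ih.deriv_of_isOpen hs (by simp)

lemma iter_hasDerivAt {u : ℝ → ℝ} {s : Set ℝ} (hs : IsOpen s)
    (hu : ContDiffOn ℝ (⊤ : ℕ∞) u s) (k : ℕ) {x : ℝ} (hx : x ∈ s) :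
    HasDerivAt (iteratedDeriv k u) (iteratedDeriv (k+1) u x) x := by
  have h := iter_contDiffOn hs hu k
  have hd : DifferentiableAt ℝ (iteratedDeriv k u) x := by
    have := (h.contDiffAt (hs.mem_nhds hx))
    exact this.differentiableAt (by simp)
  have := hd.hasDerivAt
  rwa [iteratedDeriv_succ]

lemma iter_continuousOn {u : ℝ → ℝ} {s : Set ℝ} (hs : IsOpen s)
    (hu : ContDiffOn ℝ (⊤ : ℕ∞) u s) (k : ℕ) : ContinuousOn (iteratedDeriv k u) s :=
  (iter_contDiffOn hs hu k).continuousOn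

lemma cont_rpow_sq {f : ℝ → ℝ} {s : Set ℝ} (hf : ContinuousOn f s) (c : ℝ)
    (hs : ∀ x ∈ s, 0 < x) :
    ContinuousOn (fun x : ℝ => x ^ (c:ℝ) * f x ^ 2) s := by
  refine ContinuousOn.mul ?_ ((hf.pow 2))
  intro x hx
  exact (Real.continuousAt_rpow_const x c (Or.inl (hs x hx).ne')).continuousWithinAt

lemma rpow_contOn (c : ℝ) {s : Set ℝ} (hs : ∀ x ∈ s, (0:ℝ) < x) :
    ContinuousOn (fun x : ℝ => x ^ (c:ℝ)) s := fun x hx =>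
  (Real.continuousAt_rpow_const x c (Or.inl (hs x hx).ne')).continuousWithinAt

lemma exists_small_point {f : ℝ → ℝ} {a b : ℝ} (hab : a < b)
    (hfm : IntegrableOn (fun x => f x ^ 2) (Ioo a b)) :
    ∃ x₀ ∈ Ioo a b, f x₀ ^ 2 ≤ (2/(b - a)) * ∫ x in Ioo a b, f x ^ 2 := by
  set A := ∫ x in Ioo a b, f x ^ 2 with hA
  by_contra hcon
  push_neg at hcon
  have hann : 0 ≤ A := setIntegral_nonneg measurableSet_Ioo (fun x _ => sq_nonneg _)
  have hmono : ∫ x in Ioo a b, (2/(b-a)) * A ≤ A := by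
    refine setIntegral_mono_on (integrableOn_const measure_Ioo_lt_top.ne) hfm
      measurableSet_Ioo ?_
    exact fun x hx => (hcon x hx).le
  rw [setIntegral_const, Real.volume_real_Ioo_of_le hab.le] at hmono
  have h2A : 2 * A ≤ A := by
    rw [smul_eq_mul] at hmono
    have hba : b - a ≠ 0 := by linarith
    calc 2 * A = (b - a) * (2 / (b - a) * A) := by field_simp
    _ ≤ A := hmono
  have hA0 : A = 0 := by linarith
  have hae : (fun x => f x ^ 2) =ᵐ[volume.restrict (Ioo a b)] 0 := by
    refine (integral_eq_zero_iff_of_nonneg_ae ?_ hfm).mp hA0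
    exact Eventually.of_forall (fun x => sq_nonneg _)
  have hae2 : ∀ᵐ x ∂(volume.restrict (Ioo a b)), f x ^ 2 = 0 := hae
  have hbad : ∀ x ∈ Ioo a b, ¬ (f x ^ 2 = 0) := by
    intro x hx h0
    have := hcon x hx
    rw [hA0, h0] at this
    simp at this
  have : volume (Ioo a b) = 0 := by
    have h1 : ∀ᵐ x ∂volume, x ∈ Ioo a b → f x ^ 2 = 0 :=
      (ae_restrict_iff' measurableSet_Ioo).mp hae2
    have h2 : volume {x : ℝ | ¬ (x ∈ Ioo a b → f x ^ 2 = 0)} = 0 := h1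
    refine measure_mono_null (fun x hx => ?_) h2
    simp only [mem_setOf_eq]
    exact fun himp => hbad x hx (himp hx)
  rw [Real.volume_Ioo] at this
  simp [ENNReal.ofReal_eq_zero] at this
  linarith

lemma amgm_aux (c P Q : ℝ) (hc : 0 < c) (hP : 0 ≤ P) (hQ : 0 ≤ Q) :
    P * Q ≤ c/4 * P^2 + 1/c * Q^2 := by
  have key : c * (P*Q) ≤ c^2/4 * P^2 + Q^2 := by nlinarith [sq_nonneg (c/2 * P - Q)]
  have hc' : c ≠ 0 := hc.ne'
  calc P*Q = (c*(P*Q))/c := by field_simp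
    _ ≤ (c^2/4 * P^2 + Q^2)/c := by gcongr
    _ = c/4 * P^2 + 1/c * Q^2 := by field_simp

lemma amgm_rpow (x : ℝ) (hx : 0 < x) (a : ℝ) (ha : 2 ≤ a) (p q : ℝ) :
    |x ^ (a-1) * (p * q)| ≤ ((a-1)/4) * (x ^ (a-2) * p ^ 2) + (1/(a-1)) * (x ^ a * q ^ 2) := by
  set s := x ^ ((a-2)/2) with hs
  set t := x ^ (a/2) with ht
  have hs0 : 0 ≤ s := Real.rpow_nonneg hx.le _
  have ht0 : 0 ≤ t := Real.rpow_nonneg hx.le _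
  have hst : s * t = x ^ (a-1) := by
    rw [hs, ht, ← Real.rpow_add hx]; ring_nf
  have hss : x ^ (a-2) * p ^ 2 = (s * |p|)^2 := by
    rw [mul_pow, sq_abs, hs, ← Real.rpow_natCast (x ^ ((a-2)/2)) 2, ← Real.rpow_mul hx.le]
    norm_num
  have htt : x ^ a * q ^ 2 = (t * |q|)^2 := by
    rw [mul_pow, sq_abs, ht, ← Real.rpow_natCast (x ^ (a/2)) 2, ← Real.rpow_mul hx.le]
    norm_num
  have habs : |x ^ (a-1) * (p * q)| = (s * |p|) * (t * |q|) := by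
    rw [← hst, abs_mul, abs_mul, abs_mul, abs_of_nonneg hs0, abs_of_nonneg ht0]; ring
  rw [habs, hss, htt]
  exact amgm_aux (a-1) _ _ (by linarith) (mul_nonneg hs0 (abs_nonneg p))
    (mul_nonneg ht0 (abs_nonneg q))

lemma dominated_int {g h : ℝ → ℝ} {s : Set ℝ} (hs : MeasurableSet s)
    (hg : ContinuousOn g s) (hhi : IntegrableOn h s)
    (hbound : ∀ x ∈ s, 0 ≤ g x ∧ g x ≤ h x) :
    IntegrableOn g s ∧ ∫ x in s, g x ≤ ∫ x in s, h x := by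
  have hgi : IntegrableOn g s := by
    refine Integrable.mono' hhi (hg.aestronglyMeasurable hs) ?_
    refine (ae_restrict_iff' hs).mpr (Eventually.of_forall fun x hx => ?_)
    rw [Real.norm_of_nonneg (hbound x hx).1]
    exact (hbound x hx).2
  exact ⟨hgi, setIntegral_mono_on hgi hhi hs fun x hx => (hbound x hx).2⟩

lemma int_mono_subset {h : ℝ → ℝ} {s t : Set ℝ} (hsub : s ⊆ t)
    (hh : IntegrableOn h t) (hnn : ∀ x ∈ t, 0 ≤ h x) (ht : MeasurableSet t) :
    ∫ x in s, h x ≤ ∫ x in t, h x := by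
  refine setIntegral_mono_set hh ?_ (HasSubset.Subset.eventuallyLE hsub)
  exact (ae_restrict_iff' ht).mpr (Eventually.of_forall hnn)

lemma one_le_rpow_pair {c x : ℝ} (hc : 0 < c) (hcx : c ≤ x) {a : ℝ} (ha : 0 ≤ a) :
    (1:ℝ) ≤ c ^ (-a) * x ^ a := by
  have h1 : c ^ a ≤ x ^ a := Real.rpow_le_rpow hc.le hcx ha
  have h2 : c ^ (-a) * c ^ a = 1 := by
    rw [← Real.rpow_add hc]; simp
  calc (1:ℝ) = c ^ (-a) * c ^ a := h2.symm
    _ ≤ c ^ (-a) * x ^ a := by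
        have : (0:ℝ) < c ^ (-a) := Real.rpow_pos_of_pos hc _
        exact mul_le_mul_of_nonneg_left h1 this.le


lemma hardy_key (b : ℝ) (hb : 0 < b) (a : ℝ) (ha : 2 ≤ a) (f f' : ℝ → ℝ)
    (hf : ∀ x ∈ Ioo (0:ℝ) b, HasDerivAt f (f' x) x)
    (hf'c : ContinuousOn f' (Ioo (0:ℝ) b))
    (hD : IntegrableOn (fun x => x ^ a * f' x ^ 2) (Ioo (0:ℝ) b))
    (x₀ : ℝ) (hx₀ : x₀ ∈ Ioo (0:ℝ) b) (ε : ℝ) (hε : ε ∈ Ioo 0 x₀) :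
    ∫ x in Ioo ε x₀, x ^ (a-2) * f x ^ 2 ≤
      2 * (x₀ ^ (a-1) * f x₀ ^ 2 / (a-1)) +
        (4/(a-1)^2) * ∫ x in Ioo (0:ℝ) b, x ^ a * f' x ^ 2 := by
  have ha1 : (0:ℝ) < a - 1 := by linarith
  have hεle : ε ≤ x₀ := hε.2.le
  have hsub : Icc ε x₀ ⊆ Ioo (0:ℝ) b :=
    fun x hx => ⟨lt_of_lt_of_le hε.1 hx.1, lt_of_le_of_lt hx.2 hx₀.2⟩
  have hcf : ContinuousOn f (Ioo (0:ℝ) b) := fun x hx =>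
    (hf x hx).continuousAt.continuousWithinAt
  set F : ℝ → ℝ := fun x => x ^ (a-1) * f x ^ 2 / (a-1) with hF
  set G : ℝ → ℝ := fun x => x ^ (a-2) * f x ^ 2 + (2/(a-1)) * (x ^ (a-1) * (f x * f' x)) with hG
  have hder : ∀ x ∈ uIcc ε x₀, HasDerivAt F (G x) x := by
    intro x hx
    rw [uIcc_of_le hεle] at hx
    have hx' := hsub hx
    have hx0 : (0:ℝ) < x := hx'.1
    have h1 : HasDerivAt (fun y : ℝ => y ^ (a-1)) ((a-1) * x ^ (a-1-1)) x :=
      Real.hasDerivAt_rpow_const (Or.inl hx0.ne')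
    have h2 : HasDerivAt (fun y => f y ^ 2) (2 * f x * f' x) x := by
      have := (hf x hx').pow 2
      norm_num at this
      exact this
    have h3 := (h1.mul h2).div_const (a-1)
    have h3' : HasDerivAt F (((a-1) * x ^ (a-1-1) * f x ^ 2 + x ^ (a-1) * (2 * f x * f' x)) / (a-1)) x := h3
    convert h3' using 1
    have hexp : x ^ (a-1-1) = x ^ (a-2) := by congr 1; ring
    rw [hG]
    simp only []
    rw [hexp]
    field_simp
  have hGcont : ContinuousOn G (uIcc ε x₀) := by
    rw [uIcc_of_le hεle]
    have h0 : ∀ x ∈ Icc ε x₀, (0:ℝ) < x := fun x hx => (hsub hx).1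
    exact (((rpow_contOn (a-2) h0).mul ((hcf.mono hsub).pow 2)).add
      (continuousOn_const.mul (((rpow_contOn (a-1) h0)).mul
        ((hcf.mono hsub).mul (hf'c.mono hsub)))))
  have hGint : IntervalIntegrable G volume ε x₀ := hGcont.intervalIntegrable
  have hFTC : ∫ x in ε..x₀, G x = F x₀ - F ε := integral_eq_sub_of_hasDerivAt hder hGint
  have h0' : ∀ x ∈ Icc ε x₀, (0:ℝ) < x := fun x hx => (hsub hx).1
  have hI1 : IntervalIntegrable (fun x => x ^ (a-2) * f x ^ 2) volume ε x₀ := by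
    apply ContinuousOn.intervalIntegrable
    rw [uIcc_of_le hεle]
    exact (rpow_contOn (a-2) h0').mul ((hcf.mono hsub).pow 2)
  have hI2 : IntervalIntegrable (fun x => x ^ (a-1) * (f x * f' x)) volume ε x₀ := by
    apply ContinuousOn.intervalIntegrable
    rw [uIcc_of_le hεle]
    exact (rpow_contOn (a-1) h0').mul ((hcf.mono hsub).mul (hf'c.mono hsub))
  have hsplit : ∫ x in ε..x₀, G x = (∫ x in ε..x₀, x ^ (a-2) * f x ^ 2)
      + (2/(a-1)) * ∫ x in ε..x₀, x ^ (a-1) * (f x * f' x) := by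
    rw [hG]
    rw [integral_add hI1 (hI2.const_mul _), intervalIntegral.integral_const_mul]
  set J := ∫ x in ε..x₀, x ^ (a-2) * f x ^ 2 with hJ
  set K := ∫ x in ε..x₀, x ^ (a-1) * (f x * f' x) with hK
  have hJeq : J = F x₀ - F ε - (2/(a-1)) * K := by
    rw [hsplit] at hFTC; linarith
  have hFε : 0 ≤ F ε := by
    rw [hF]
    have := Real.rpow_nonneg (le_of_lt hε.1) (a-1)
    positivity
  -- bound on |K|
  have hI3 : IntervalIntegrable (fun x => ((a-1)/4) * (x ^ (a-2) * f x ^ 2)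
      + (1/(a-1)) * (x ^ a * f' x ^ 2)) volume ε x₀ := by
    apply ContinuousOn.intervalIntegrable
    rw [uIcc_of_le hεle]
    exact ((continuousOn_const.mul ((rpow_contOn (a-2) h0').mul ((hcf.mono hsub).pow 2))).add
      (continuousOn_const.mul ((rpow_contOn a h0').mul ((hf'c.mono hsub).pow 2))))
  have habsK : |K| ≤ ∫ x in ε..x₀, |x ^ (a-1) * (f x * f' x)| :=
    intervalIntegral.abs_integral_le_integral_abs hεle
  have hmono : (∫ x in ε..x₀, |x ^ (a-1) * (f x * f' x)|) ≤
      ∫ x in ε..x₀, (((a-1)/4) * (x ^ (a-2) * f x ^ 2) + (1/(a-1)) * (x ^ a * f' x ^ 2)) := by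
    refine intervalIntegral.integral_mono_on hεle hI2.abs hI3 ?_
    intro x hx
    exact amgm_rpow x (h0' x hx) a ha (f x) (f' x)
  have hI4 : IntervalIntegrable (fun x => x ^ a * f' x ^ 2) volume ε x₀ := by
    apply ContinuousOn.intervalIntegrable
    rw [uIcc_of_le hεle]
    exact (rpow_contOn a h0').mul ((hf'c.mono hsub).pow 2)
  have hsplit2 : (∫ x in ε..x₀, (((a-1)/4) * (x ^ (a-2) * f x ^ 2)
      + (1/(a-1)) * (x ^ a * f' x ^ 2)))
      = ((a-1)/4) * J + (1/(a-1)) * ∫ x in ε..x₀, x ^ a * f' x ^ 2 := by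
    rw [integral_add (hI1.const_mul _) (hI4.const_mul _), intervalIntegral.integral_const_mul,
      intervalIntegral.integral_const_mul]
  set Dε := ∫ x in ε..x₀, x ^ a * f' x ^ 2 with hDε
  have hDεle : Dε ≤ ∫ x in Ioo (0:ℝ) b, x ^ a * f' x ^ 2 := by
    rw [hDε, intervalIntegral.integral_of_le hεle, integral_Ioc_eq_integral_Ioo]
    refine int_mono_subset (fun x hx => ⟨lt_trans hε.1 hx.1, lt_trans hx.2 hx₀.2⟩) hD
      (fun x hx => mul_nonneg (Real.rpow_nonneg hx.1.le _) (sq_nonneg _)) measurableSet_Ioo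
  have hKbound : (2/(a-1)) * K ≥ -((1/2) * J + (2/(a-1)^2) * Dε) := by
    have h1 : -K ≤ |K| := neg_le_abs K
    have hc : (0:ℝ) < 2/(a-1) := by positivity
    have h2 : |K| ≤ ((a-1)/4) * J + (1/(a-1)) * Dε := by
      rw [← hsplit2]; exact le_trans habsK hmono
    have h3 : (2/(a-1)) * (-K) ≤ (2/(a-1)) * (((a-1)/4) * J + (1/(a-1)) * Dε) :=
      mul_le_mul_of_nonneg_left (le_trans h1 h2) hc.le
    have h4 : (2/(a-1)) * (((a-1)/4) * J + (1/(a-1)) * Dε)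
        = (1/2) * J + (2/(a-1)^2) * Dε := by field_simp; ring
    linarith [h3, h4 ▸ h3]
  have hDnn : 0 ≤ Dε := by
    rw [hDε, intervalIntegral.integral_of_le hεle]
    exact setIntegral_nonneg measurableSet_Ioc
      (fun x hx => mul_nonneg (Real.rpow_nonneg (lt_of_lt_of_le hε.1 hx.1.le).le _) (sq_nonneg _))
  have hfinal : J ≤ 2 * F x₀ + (4/(a-1)^2) * Dε := by
    have h5 : J ≤ F x₀ + (1/2) * J + (2/(a-1)^2) * Dε := by
      rw [hJeq]; linarith [hKbound, hFε]
    have h44 : (4/(a-1)^2) * Dε = 2 * ((2/(a-1)^2) * Dε) := by ring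
    linarith
  have hDD : (4/(a-1)^2) * Dε ≤ (4/(a-1)^2) * ∫ x in Ioo (0:ℝ) b, x ^ a * f' x ^ 2 :=
    mul_le_mul_of_nonneg_left hDεle (by positivity)
  have hJIoo : (∫ x in Ioo ε x₀, x ^ (a-2) * f x ^ 2) = J := by
    rw [hJ, intervalIntegral.integral_of_le hεle, integral_Ioc_eq_integral_Ioo]
  rw [hJIoo]
  have hFx0 : 2 * F x₀ = 2 * (x₀ ^ (a-1) * f x₀ ^ 2 / (a-1)) := rfl
  linarith [hfinal, hDD]






lemma hardy_left (b : ℝ) (hb : 0 < b) (a : ℝ) (ha : 2 ≤ a) :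
    ∃ C > (0:ℝ), ∀ f f' : ℝ → ℝ,
      (∀ x ∈ Ioo (0:ℝ) b, HasDerivAt f (f' x) x) →
      ContinuousOn f' (Ioo (0:ℝ) b) →
      IntegrableOn (fun x => x ^ a * f x ^ 2) (Ioo (0:ℝ) b) →
      IntegrableOn (fun x => x ^ a * f' x ^ 2) (Ioo (0:ℝ) b) →
      IntegrableOn (fun x => x ^ (a-2) * f x ^ 2) (Ioo (0:ℝ) b) ∧
      ∫ x in Ioo (0:ℝ) b, x ^ (a-2) * f x ^ 2 ≤
        C * ((∫ x in Ioo (0:ℝ) b, x ^ a * f x ^ 2) + ∫ x in Ioo (0:ℝ) b, x ^ a * f' x ^ 2) := by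
  have ha1 : (0:ℝ) < a - 1 := by linarith
  have hb2 : (0:ℝ) < b/2 := by linarith
  set CA : ℝ := 2 * (b ^ (a-1) * ((2/(b - b/2)) * ((b/2) ^ (-a))) / (a-1)) + (b/2) ^ (-(2:ℝ))
    with hCAdef
  set CD : ℝ := 4/(a-1)^2 with hCDdef
  have hCApos : 0 < CA := by
    have h1 : (0:ℝ) < b ^ (a-1) := Real.rpow_pos_of_pos hb _
    have h2 : (0:ℝ) < (b/2) ^ (-a) := Real.rpow_pos_of_pos hb2 _
    have h3 : (0:ℝ) < (b/2) ^ (-(2:ℝ)) := Real.rpow_pos_of_pos hb2 _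
    have h4 : (0:ℝ) < b - b/2 := by linarith
    positivity
  have hCDpos : 0 < CD := by positivity
  refine ⟨CA + CD, by positivity, fun f f' hf hf'c hA hD => ?_⟩
  set A := ∫ x in Ioo (0:ℝ) b, x ^ a * f x ^ 2 with hAdef
  set D := ∫ x in Ioo (0:ℝ) b, x ^ a * f' x ^ 2 with hDdef
  have hIoonn : ∀ x ∈ Ioo (0:ℝ) b, 0 ≤ x ^ a * f x ^ 2 :=
    fun x hx => mul_nonneg (Real.rpow_nonneg hx.1.le _) (sq_nonneg _)
  have hIoonn' : ∀ x ∈ Ioo (0:ℝ) b, 0 ≤ x ^ a * f' x ^ 2 :=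
    fun x hx => mul_nonneg (Real.rpow_nonneg hx.1.le _) (sq_nonneg _)
  have hApos : 0 ≤ A := setIntegral_nonneg measurableSet_Ioo hIoonn
  have hDpos : 0 ≤ D := setIntegral_nonneg measurableSet_Ioo hIoonn'
  have hcf : ContinuousOn f (Ioo (0:ℝ) b) := fun x hx =>
    (hf x hx).continuousAt.continuousWithinAt
  -- Step 1 : f^2 integrable on (b/2, b), controlled by A
  have hsub2 : Ioo (b/2) b ⊆ Ioo (0:ℝ) b := Ioo_subset_Ioo (by linarith) le_rfl
  have hdom1 := dominated_int (g := fun x => f x ^ 2)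
    (h := fun x => (b/2) ^ (-a) * (x ^ a * f x ^ 2)) measurableSet_Ioo
    ((hcf.mono hsub2).pow 2) ((hA.mono_set hsub2).const_mul _) ?_
  swap
  · intro x hx
    refine ⟨sq_nonneg _, ?_⟩
    have h1 : (1:ℝ) ≤ (b/2) ^ (-a) * x ^ a := one_le_rpow_pair hb2 hx.1.le (by linarith)
    calc f x ^ 2 = 1 * f x ^ 2 := (one_mul _).symm
      _ ≤ ((b/2) ^ (-a) * x ^ a) * f x ^ 2 :=
          mul_le_mul_of_nonneg_right h1 (sq_nonneg _)
      _ = (b/2) ^ (-a) * (x ^ a * f x ^ 2) := by ring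
  obtain ⟨hf2int, hf2bd⟩ := hdom1
  have hf2bd' : (∫ x in Ioo (b/2) b, f x ^ 2) ≤ (b/2) ^ (-a) * A := by
    refine le_trans hf2bd ?_
    rw [MeasureTheory.integral_const_mul]
    refine mul_le_mul_of_nonneg_left ?_ (Real.rpow_pos_of_pos hb2 _).le
    exact int_mono_subset hsub2 hA hIoonn measurableSet_Ioo
  -- Step 2 : pick a good point x₀
  obtain ⟨x₀, hx₀mem, hx₀val⟩ := exists_small_point (show b/2 < b by linarith) hf2int
  have hx₀ : x₀ ∈ Ioo (0:ℝ) b := ⟨lt_trans hb2 hx₀mem.1, hx₀mem.2⟩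
  have hFx₀ : x₀ ^ (a-1) * f x₀ ^ 2 / (a-1) ≤ b ^ (a-1) * ((2/(b - b/2)) * ((b/2) ^ (-a))) / (a-1) * A := by
    have h1 : x₀ ^ (a-1) ≤ b ^ (a-1) := Real.rpow_le_rpow hx₀.1.le hx₀.2.le (by linarith)
    have h2 : f x₀ ^ 2 ≤ (2/(b - b/2)) * ((b/2) ^ (-a) * A) := by
      refine le_trans hx₀val ?_
      refine mul_le_mul_of_nonneg_left hf2bd' ?_
      have : (0:ℝ) < b - b/2 := by linarith
      positivity
    have h3 : 0 ≤ x₀ ^ (a-1) := Real.rpow_nonneg hx₀.1.le _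
    have h4 : 0 ≤ (2/(b - b/2)) * ((b/2) ^ (-a) * A) := le_trans (sq_nonneg _) h2
    have h5 : x₀ ^ (a-1) * f x₀ ^ 2 ≤ b ^ (a-1) * ((2/(b - b/2)) * ((b/2) ^ (-a) * A)) :=
      mul_le_mul h1 h2 (sq_nonneg _) (le_trans h3 h1)
    calc x₀ ^ (a-1) * f x₀ ^ 2 / (a-1)
        ≤ b ^ (a-1) * ((2/(b - b/2)) * ((b/2) ^ (-a) * A)) / (a-1) := by
          gcongr
      _ = b ^ (a-1) * ((2/(b - b/2)) * ((b/2) ^ (-a))) / (a-1) * A := by ring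
  -- Step 3 : limit over ε → 0 on (0, x₀)
  set B : ℝ := 2 * (x₀ ^ (a-1) * f x₀ ^ 2 / (a-1)) + (4/(a-1)^2) * D with hBdef
  set φ : ℝ → ℝ := fun x => x ^ (a-2) * f x ^ 2 with hφdef
  have hφcont : ContinuousOn φ (Ioo (0:ℝ) b) := by
    exact (rpow_contOn (a-2) (fun x hx => hx.1)).mul (hcf.pow 2)
  have hφnn : ∀ x ∈ Ioo (0:ℝ) b, 0 ≤ φ x :=
    fun x hx => mul_nonneg (Real.rpow_nonneg hx.1.le _) (sq_nonneg _)
  set εs : ℕ → ℝ := fun i => x₀ * (1/2) ^ (i+1) with hεs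
  have hεsmem : ∀ i, εs i ∈ Ioo 0 x₀ := by
    intro i
    constructor
    · have : (0:ℝ) < (1/2:ℝ) ^ (i+1) := by positivity
      exact mul_pos hx₀.1 this
    · have h1 : ((1:ℝ)/2) ^ (i+1) < 1 := by
        apply pow_lt_one₀ (by norm_num) (by norm_num)
        omega
      have h2 : x₀ * ((1:ℝ)/2) ^ (i+1) < x₀ * 1 := mul_lt_mul_of_pos_left h1 hx₀.1
      rw [hεs]
      simpa using h2
  have hεstend : Tendsto εs atTop (𝓝 0) := by
    have h1 : Tendsto (fun i : ℕ => ((1:ℝ)/2) ^ (i+1)) atTop (𝓝 0) :=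
      (tendsto_pow_atTop_nhds_zero_of_lt_one (by norm_num) (by norm_num)).comp
        (tendsto_add_atTop_nat 1)
    have h2 := h1.const_mul x₀
    rw [hεs]
    simpa using h2
  have hcover : AECover (volume.restrict (Ioo (0:ℝ) x₀)) atTop
      (fun i => Ioc (εs i) x₀) :=
    MeasureTheory.aecover_Ioo_of_Ioc hεstend tendsto_const_nhds
  have hIoox₀sub : Ioo (0:ℝ) x₀ ⊆ Ioo 0 b := Ioo_subset_Ioo le_rfl hx₀.2.le
  have hint_i : ∀ i, IntegrableOn φ (Ioc (εs i) x₀) (volume.restrict (Ioo (0:ℝ) x₀)) := by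
    intro i
    rw [IntegrableOn, Measure.restrict_restrict measurableSet_Ioc]
    have hIccsub : Ioc (εs i) x₀ ∩ Ioo 0 x₀ ⊆ Icc (εs i) x₀ := fun x hx => ⟨hx.1.1.le, hx.1.2⟩
    have hIccsub2 : Icc (εs i) x₀ ⊆ Ioo (0:ℝ) b :=
      fun x hx => ⟨lt_of_lt_of_le (hεsmem i).1 hx.1, lt_of_le_of_lt hx.2 hx₀.2⟩
    have : IntegrableOn φ (Icc (εs i) x₀) volume :=
      (hφcont.mono hIccsub2).integrableOn_compact isCompact_Icc
    exact this.mono_set hIccsub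
  have hbd_i : ∀ i, (∫ x in Ioc (εs i) x₀, ‖φ x‖ ∂(volume.restrict (Ioo (0:ℝ) x₀))) ≤ B := by
    intro i
    rw [Measure.restrict_restrict measurableSet_Ioc]
    have hseteq : Ioc (εs i) x₀ ∩ Ioo 0 x₀ = Ioo (εs i) x₀ := by
      ext x
      constructor
      · rintro ⟨⟨h1, h2⟩, ⟨h3, h4⟩⟩; exact ⟨h1, h4⟩
      · rintro ⟨h1, h2⟩; exact ⟨⟨h1, h2.le⟩, ⟨lt_trans (hεsmem i).1 h1, h2⟩⟩
    rw [hseteq]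
    have hnorm : ∫ x in Ioo (εs i) x₀, ‖φ x‖ = ∫ x in Ioo (εs i) x₀, φ x := by
      refine setIntegral_congr_fun measurableSet_Ioo (fun x hx => ?_)
      exact Real.norm_of_nonneg (hφnn x ⟨lt_trans (hεsmem i).1 hx.1, lt_trans hx.2 hx₀.2⟩)
    rw [hnorm]
    exact hardy_key b hb a ha f f' hf hf'c hD x₀ hx₀ (εs i) (hεsmem i)
  have hφint0 : IntegrableOn φ (Ioo (0:ℝ) x₀) volume :=
    hcover.integrable_of_integral_norm_bounded B hint_i (Eventually.of_forall hbd_i)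
  have hφbd0 : (∫ x in Ioo (0:ℝ) x₀, φ x) ≤ B := by
    have htend := hcover.integral_tendsto_of_countably_generated hφint0
    refine le_of_tendsto htend (Eventually.of_forall (fun i => ?_))
    rw [Measure.restrict_restrict measurableSet_Ioc]
    have hseteq : Ioc (εs i) x₀ ∩ Ioo 0 x₀ = Ioo (εs i) x₀ := by
      ext x
      constructor
      · rintro ⟨⟨h1, h2⟩, ⟨h3, h4⟩⟩; exact ⟨h1, h4⟩
      · rintro ⟨h1, h2⟩; exact ⟨⟨h1, h2.le⟩, ⟨lt_trans (hεsmem i).1 h1, h2⟩⟩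
    rw [hseteq]
    exact hardy_key b hb a ha f f' hf hf'c hD x₀ hx₀ (εs i) (hεsmem i)
  -- Step 4 : tail on [x₀, b)
  have htailsub : Ico x₀ b ⊆ Ioo (0:ℝ) b := fun x hx => ⟨lt_of_lt_of_le hx₀.1 hx.1, hx.2⟩
  have hdom2 := dominated_int (g := φ) (h := fun x => (b/2) ^ (-(2:ℝ)) * (x ^ a * f x ^ 2))
    measurableSet_Ico (hφcont.mono htailsub) ((hA.mono_set htailsub).const_mul _) ?_
  swap
  · intro x hx
    have hx' := htailsub hx
    refine ⟨hφnn x hx', ?_⟩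
    have hxpos : (0:ℝ) < x := hx'.1
    have hxb2 : b/2 ≤ x := le_trans (le_of_lt hx₀mem.1) hx.1
    have key : x ^ (a-2) ≤ (b/2) ^ (-(2:ℝ)) * x ^ a := by
      have h1 : x ^ (a-2) = x ^ (-(2:ℝ)) * x ^ a := by
        rw [← Real.rpow_add hxpos]; ring_nf
      rw [h1]
      refine mul_le_mul_of_nonneg_right ?_ (Real.rpow_nonneg hxpos.le _)
      rw [Real.rpow_neg hxpos.le, Real.rpow_neg hb2.le]
      refine inv_anti₀ (Real.rpow_pos_of_pos hb2 _) ?_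
      exact Real.rpow_le_rpow hb2.le hxb2 (by norm_num)
    calc φ x = x ^ (a-2) * f x ^ 2 := rfl
      _ ≤ ((b/2) ^ (-(2:ℝ)) * x ^ a) * f x ^ 2 :=
          mul_le_mul_of_nonneg_right key (sq_nonneg _)
      _ = (b/2) ^ (-(2:ℝ)) * (x ^ a * f x ^ 2) := by ring
  obtain ⟨htailint, htailbd⟩ := hdom2
  have htailbd' : (∫ x in Ico x₀ b, φ x) ≤ (b/2) ^ (-(2:ℝ)) * A := by
    refine le_trans htailbd ?_
    rw [MeasureTheory.integral_const_mul]
    refine mul_le_mul_of_nonneg_left ?_ (Real.rpow_nonneg hb2.le _)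
    exact int_mono_subset htailsub hA hIoonn measurableSet_Ioo
  -- Step 5 : union
  have hunion : Ioo (0:ℝ) x₀ ∪ Ico x₀ b = Ioo (0:ℝ) b := Ioo_union_Ico_eq_Ioo hx₀.1 hx₀.2.le
  have hdisj : Disjoint (Ioo (0:ℝ) x₀) (Ico x₀ b) := by
    refine disjoint_left.mpr (fun x hx hx' => ?_)
    exact absurd hx.2 (not_lt.mpr hx'.1)
  have hφint : IntegrableOn φ (Ioo (0:ℝ) b) := by
    rw [← hunion]
    exact hφint0.union htailint
  refine ⟨hφint, ?_⟩
  have hsplitint : ∫ x in Ioo (0:ℝ) b, φ x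
      = (∫ x in Ioo (0:ℝ) x₀, φ x) + ∫ x in Ico x₀ b, φ x := by
    rw [← hunion]
    exact setIntegral_union hdisj measurableSet_Ico hφint0 htailint
  calc ∫ x in Ioo (0:ℝ) b, φ x
      = (∫ x in Ioo (0:ℝ) x₀, φ x) + ∫ x in Ico x₀ b, φ x := hsplitint
    _ ≤ B + (b/2) ^ (-(2:ℝ)) * A := add_le_add hφbd0 htailbd'
    _ ≤ CA * A + CD * D := by
        rw [hBdef, hCAdef, hCDdef]
        have := hFx₀
        nlinarith [hApos, hDpos]
    _ ≤ (CA + CD) * (A + D) := by nlinarith [hApos, hDpos, hCApos.le, hCDpos.le]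


section reflect

variable (R : ℝ)

noncomputable def reflEquiv : ℝ ≃ᵐ ℝ := MeasurableEquiv.subLeft R

lemma reflMP : MeasurePreserving (fun x : ℝ => R - x) volume volume :=
  Measure.measurePreserving_sub_left volume R

lemma reflEmb : MeasurableEmbedding (fun x : ℝ => R - x) :=
  (MeasurableEquiv.subLeft R).measurableEmbedding

lemma refl_preimage {b : ℝ} : (fun x : ℝ => R - x) ⁻¹' (Ioo b R) = Ioo 0 (R - b) := by
  ext x
  simp only [mem_preimage, mem_Ioo]
  constructor <;> intro h <;> constructor <;> linarith [h.1, h.2]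

lemma refl_integrableOn {b : ℝ} (g : ℝ → ℝ) :
    IntegrableOn (fun x => g (R - x)) (Ioo 0 (R - b)) ↔ IntegrableOn g (Ioo b R) := by
  rw [← refl_preimage R]
  exact (reflMP R).integrableOn_comp_preimage (reflEmb R) (f := g) (s := Ioo b R)

lemma refl_integral {b : ℝ} (g : ℝ → ℝ) :
    ∫ x in Ioo 0 (R - b), g (R - x) = ∫ y in Ioo b R, g y := by
  rw [← refl_preimage R]
  exact (reflMP R).setIntegral_preimage_emb (reflEmb R) g (Ioo b R)

end reflect

lemma hardy_right (R b : ℝ) (hb : b < R) (a : ℝ) (ha : 2 ≤ a) :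
    ∃ C > (0:ℝ), ∀ f f' : ℝ → ℝ,
      (∀ x ∈ Ioo b R, HasDerivAt f (f' x) x) →
      ContinuousOn f' (Ioo b R) →
      IntegrableOn (fun x => (R - x) ^ a * f x ^ 2) (Ioo b R) →
      IntegrableOn (fun x => (R - x) ^ a * f' x ^ 2) (Ioo b R) →
      IntegrableOn (fun x => (R - x) ^ (a-2) * f x ^ 2) (Ioo b R) ∧
      ∫ x in Ioo b R, (R - x) ^ (a-2) * f x ^ 2 ≤
        C * ((∫ x in Ioo b R, (R - x) ^ a * f x ^ 2)
          + ∫ x in Ioo b R, (R - x) ^ a * f' x ^ 2) := by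
  obtain ⟨C, hCpos, hC⟩ := hardy_left (R - b) (by linarith) a ha
  refine ⟨C, hCpos, fun f f' hf hf'c hA hD => ?_⟩
  set g : ℝ → ℝ := fun x => f (R - x) with hg
  set g' : ℝ → ℝ := fun x => -f' (R - x) with hg'
  have hmem : ∀ x ∈ Ioo (0:ℝ) (R - b), R - x ∈ Ioo b R := by
    intro x hx; exact ⟨by linarith [hx.2], by linarith [hx.1]⟩
  have hgder : ∀ x ∈ Ioo (0:ℝ) (R - b), HasDerivAt g (g' x) x := by
    intro x hx
    have h1 : HasDerivAt (fun y : ℝ => R - y) (-1) x := by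
      simpa using (hasDerivAt_id x).const_sub R
    have h2 := (hf (R - x) (hmem x hx)).comp x h1
    simpa [hg, hg', Function.comp_def] using h2
  have hg'c : ContinuousOn g' (Ioo (0:ℝ) (R - b)) := by
    have h1 : ContinuousOn (fun x : ℝ => R - x) (Ioo (0:ℝ) (R - b)) :=
      (continuous_const.sub continuous_id).continuousOn
    exact (hf'c.comp h1 (fun x hx => hmem x hx)).neg
  have hAr : IntegrableOn (fun x => x ^ a * g x ^ 2) (Ioo (0:ℝ) (R - b)) := by
    have := (refl_integrableOn R (b := b) (fun y => (R - y) ^ a * f y ^ 2)).mpr hA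
    refine this.congr_fun (fun x hx => ?_) measurableSet_Ioo
    simp only [hg]
    have : R - (R - x) = x := by ring
    rw [this]
  have hDr : IntegrableOn (fun x => x ^ a * g' x ^ 2) (Ioo (0:ℝ) (R - b)) := by
    have := (refl_integrableOn R (b := b) (fun y => (R - y) ^ a * f' y ^ 2)).mpr hD
    refine this.congr_fun (fun x hx => ?_) measurableSet_Ioo
    simp only [hg']
    have h2 : R - (R - x) = x := by ring
    rw [h2]
    ring
  obtain ⟨hint, hbd⟩ := hC g g' hgder hg'c hAr hDr
  constructor
  · have := (refl_integrableOn R (b := b) (fun y => (R - y) ^ (a-2) * f y ^ 2))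
    rw [← this]
    refine hint.congr_fun (fun x hx => ?_) measurableSet_Ioo
    have h2 : R - (R - x) = x := by ring
    simp only [hg]
    rw [h2]
  · have e1 : ∫ x in Ioo b R, (R - x) ^ (a-2) * f x ^ 2
        = ∫ x in Ioo (0:ℝ) (R - b), x ^ (a-2) * g x ^ 2 := by
      rw [← refl_integral R (b := b) (fun y => (R - y) ^ (a-2) * f y ^ 2)]
      refine setIntegral_congr_fun measurableSet_Ioo (fun x hx => ?_)
      have h2 : R - (R - x) = x := by ring
      simp only [hg]; rw [h2]
    have e2 : ∫ x in Ioo b R, (R - x) ^ a * f x ^ 2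
        = ∫ x in Ioo (0:ℝ) (R - b), x ^ a * g x ^ 2 := by
      rw [← refl_integral R (b := b) (fun y => (R - y) ^ a * f y ^ 2)]
      refine setIntegral_congr_fun measurableSet_Ioo (fun x hx => ?_)
      have h2 : R - (R - x) = x := by ring
      simp only [hg]; rw [h2]
    have e3 : ∫ x in Ioo b R, (R - x) ^ a * f' x ^ 2
        = ∫ x in Ioo (0:ℝ) (R - b), x ^ a * g' x ^ 2 := by
      rw [← refl_integral R (b := b) (fun y => (R - y) ^ a * f' y ^ 2)]
      refine setIntegral_congr_fun measurableSet_Ioo (fun x hx => ?_)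
      have h2 : R - (R - x) = x := by ring
      simp only [hg']; rw [h2]; ring
    rw [e1, e2, e3]
    exact hbd

lemma w_lower (R : ℝ) (hR : 0 < R) (w : ℝ → ℝ)
    (hw_cont : ContinuousOn w (Set.Icc 0 R))
    (hw_smooth : ContDiffOn ℝ (⊤ : ℕ∞) w (Set.Ico 0 R))
    (hw_pos : ∀ r, 0 ≤ r → r < R → 0 < w r)
    (hwR : w R = 0)
    (hw_pv : ∃ w'R : ℝ, w'R < 0 ∧
      Filter.Tendsto (deriv w) (nhdsWithin R (Set.Iio R)) (nhds w'R)) :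
    ∃ c₁ > (0:ℝ), ∀ r ∈ Ioo 0 R, c₁ * (R - r) ≤ w r := by
  obtain ⟨w'R, hwneg, htend⟩ := hw_pv
  -- an interval near R where deriv w < w'R/2
  have hev : (deriv w) ⁻¹' (Iio (w'R/2)) ∈ nhdsWithin R (Iio R) :=
    htend (Iio_mem_nhds (by linarith))
  rw [mem_nhdsWithin] at hev
  obtain ⟨U, hUopen, hURmem, hUsub⟩ := hev
  obtain ⟨δ₀, hδ₀pos, hδ₀sub⟩ := Metric.isOpen_iff.mp hUopen R hURmem
  set δ : ℝ := min δ₀ (R/2) with hδdef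
  have hδpos : 0 < δ := lt_min hδ₀pos (by linarith)
  have hδR : δ ≤ R/2 := min_le_right _ _
  have hball : ∀ x, R - δ < x → x < R → deriv w x < w'R/2 := by
    intro x h1 h2
    refine hUsub ⟨hδ₀sub ?_, h2⟩
    rw [Metric.mem_ball, Real.dist_eq, abs_lt]
    constructor <;> [skip; skip]
    · have : δ ≤ δ₀ := min_le_left _ _
      linarith
    · linarith
  -- differentiability of w inside (0,R)
  have hdiff : ∀ x ∈ Ioo (0:ℝ) R, HasDerivAt w (deriv w x) x := by
    intro x hx
    have hmem : Set.Ico (0:ℝ) R ∈ nhds x :=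
      mem_nhds_iff.mpr ⟨Ioo 0 R, Ioo_subset_Ico_self, isOpen_Ioo, hx⟩
    exact ((hw_smooth.contDiffAt hmem).differentiableAt (by simp)).hasDerivAt
  -- MVT bound near R
  have hMVT : ∀ r ∈ Ioo 0 R, R - δ < r → (-w'R/2) * (R - r) ≤ w r := by
    intro r hr hrδ
    have hrR : r < R := hr.2
    obtain ⟨ξ, hξmem, hξeq⟩ := exists_hasDerivAt_eq_slope w (deriv w) hrR
      (hw_cont.mono (Icc_subset_Icc hr.1.le le_rfl))
      (fun x hx => hdiff x ⟨lt_trans hr.1 hx.1, hx.2⟩)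
    have hξlt : deriv w ξ < w'R/2 := hball ξ (lt_trans hrδ hξmem.1) hξmem.2
    rw [hwR] at hξeq
    have hRr : 0 < R - r := by linarith
    have : (0 - w r) / (R - r) < w'R / 2 := hξeq ▸ hξlt
    have h2 : 0 - w r < (w'R/2) * (R - r) := by
      calc 0 - w r = ((0 - w r)/(R - r)) * (R - r) := by field_simp
        _ < (w'R/2) * (R - r) := by
            exact mul_lt_mul_of_pos_right this hRr
    nlinarith
  -- compact part
  have hcomp : ∃ m₀ > (0:ℝ), ∀ r ∈ Icc (0:ℝ) (R - δ), m₀ ≤ w r := by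
    have hne : (Icc (0:ℝ) (R - δ)).Nonempty := ⟨0, by constructor <;> linarith⟩
    have hsub : Icc (0:ℝ) (R - δ) ⊆ Icc 0 R := Icc_subset_Icc le_rfl (by linarith)
    obtain ⟨xm, hxm, hxmin⟩ := isCompact_Icc.exists_isMinOn hne (hw_cont.mono hsub)
    refine ⟨w xm, hw_pos xm hxm.1 (by linarith [hxm.2]), fun r hr => hxmin hr⟩
  obtain ⟨m₀, hm₀pos, hm₀⟩ := hcomp
  refine ⟨min (m₀/R) (-w'R/2), lt_min (by positivity) (by linarith), ?_⟩
  intro r hr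
  by_cases hcase : r ≤ R - δ
  · have h1 : m₀ ≤ w r := hm₀ r ⟨hr.1.le, hcase⟩
    have h2 : min (m₀/R) (-w'R/2) * (R - r) ≤ (m₀/R) * R := by
      have ha : min (m₀/R) (-w'R/2) ≤ m₀/R := min_le_left _ _
      have hb : R - r ≤ R := by linarith [hr.1]
      have hc : (0:ℝ) ≤ min (m₀/R) (-w'R/2) := le_min (by positivity) (by linarith)
      calc min (m₀/R) (-w'R/2) * (R - r) ≤ (m₀/R) * (R - r) :=
            mul_le_mul_of_nonneg_right ha (by linarith [hr.2])
        _ ≤ (m₀/R) * R := by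
            refine mul_le_mul_of_nonneg_left hb (by positivity)
    have h3 : (m₀/R) * R = m₀ := by field_simp
    linarith
  · push_neg at hcase
    have := hMVT r hr hcase
    have h2 : min (m₀/R) (-w'R/2) * (R - r) ≤ (-w'R/2) * (R - r) :=
      mul_le_mul_of_nonneg_right (min_le_right _ _) (by linarith [hr.2])
    linarith



noncomputable def Ssum (R β : ℝ) (K : ℕ) (w u : ℝ → ℝ) : ℝ :=
  ∑ k ∈ Finset.range (K + 1),
    ∫ r in Ioo (0:ℝ) R, w r ^ (β + k) * r ^ 4 * iteratedDeriv k u r ^ 2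

lemma Iterm_nonneg (R β : ℝ) (w u : ℝ → ℝ) (hw_nn : ∀ r ∈ Ioo (0:ℝ) R, 0 ≤ w r) (k : ℕ) :
    0 ≤ ∫ r in Ioo (0:ℝ) R, w r ^ (β + k) * r ^ 4 * iteratedDeriv k u r ^ 2 := by
  refine setIntegral_nonneg measurableSet_Ioo (fun x hx => ?_)
  have h1 : 0 ≤ w x ^ (β + k) := Real.rpow_nonneg (hw_nn x hx) _
  have h2 : (0:ℝ) ≤ x ^ 4 := by positivity
  positivity

lemma Iterm_le_Ssum (R β : ℝ) (K : ℕ) (w u : ℝ → ℝ)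
    (hw_nn : ∀ r ∈ Ioo (0:ℝ) R, 0 ≤ w r) {k : ℕ} (hk : k ≤ K) :
    (∫ r in Ioo (0:ℝ) R, w r ^ (β + k) * r ^ 4 * iteratedDeriv k u r ^ 2)
      ≤ Ssum R β K w u := by
  refine Finset.single_le_sum (f := fun j : ℕ =>
    ∫ r in Ioo (0:ℝ) R, w r ^ (β + j) * r ^ 4 * iteratedDeriv j u r ^ 2)
    (fun i _ => Iterm_nonneg R β w u hw_nn i) ?_
  simpa using Nat.lt_succ_of_le hk

lemma Ssum_nonneg (R β : ℝ) (K : ℕ) (w u : ℝ → ℝ)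
    (hw_nn : ∀ r ∈ Ioo (0:ℝ) R, 0 ≤ w r) : 0 ≤ Ssum R β K w u :=
  Finset.sum_nonneg (fun i _ => Iterm_nonneg R β w u hw_nn i)

lemma bound_by_S (R β : ℝ) (K : ℕ) (w u : ℝ → ℝ)
    (hw_nn : ∀ r ∈ Ioo (0:ℝ) R, 0 ≤ w r)
    (hint : ∀ k ≤ K, IntegrableOn
      (fun r => w r ^ (β + k) * r ^ 4 * iteratedDeriv k u r ^ 2) (Ioo (0:ℝ) R))
    {k : ℕ} (hk : k ≤ K) {s : Set ℝ} (hsm : MeasurableSet s) (hsub : s ⊆ Ioo (0:ℝ) R)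
    {g : ℝ → ℝ} (hgc : ContinuousOn g s) {c : ℝ} (hc : 0 ≤ c)
    (hb : ∀ x ∈ s, 0 ≤ g x ∧ g x ≤ c * (w x ^ (β + k) * x ^ 4 * iteratedDeriv k u x ^ 2)) :
    IntegrableOn g s ∧ ∫ x in s, g x ≤ c * Ssum R β K w u := by
  have hIk := hint k hk
  obtain ⟨h1, h2⟩ := dominated_int hsm hgc ((hIk.mono_set hsub).const_mul c) hb
  refine ⟨h1, le_trans h2 ?_⟩
  rw [MeasureTheory.integral_const_mul]
  refine mul_le_mul_of_nonneg_left ?_ hc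
  refine le_trans (int_mono_subset hsub hIk (fun x hx => ?_) measurableSet_Ioo)
    (Iterm_le_Ssum R β K w u hw_nn hk)
  have h1 : 0 ≤ w x ^ (β + k) := Real.rpow_nonneg (hw_nn x hx) _
  positivity

lemma chainR (R β c₁ : ℝ) (hR : 0 < R) (hβ : 0 < β) (hc₁ : 0 < c₁) (m : ℕ)
    (w : ℝ → ℝ) (hw_nn : ∀ r ∈ Ioo (0:ℝ) R, 0 ≤ w r)
    (hwl : ∀ r ∈ Ioo (0:ℝ) R, c₁ * (R - r) ≤ w r) :
    ∀ p n d l : ℕ, l ≤ m → (n:ℝ) < β + d + 2 → 2*d ≤ n + 2*l → d ≤ ⌈β⌉₊ + 2*l →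
      2*⌈β⌉₊ + 2*m + 4 ≤ n + p →
    ∃ C > (0:ℝ), ∀ u : ℝ → ℝ, ContDiffOn ℝ (⊤ : ℕ∞) u (Ioo 0 R) →
      (∀ k ≤ ⌈β⌉₊ + 2*m, IntegrableOn
        (fun r => w r ^ (β + k) * r ^ 4 * iteratedDeriv k u r ^ 2) (Ioo (0:ℝ) R)) →
      IntegrableOn (fun r => (R - r) ^ (n:ℝ) * iteratedDeriv d u r ^ 2) (Ioo (R/2) R) ∧
      ∫ r in Ioo (R/2) R, (R - r) ^ (n:ℝ) * iteratedDeriv d u r ^ 2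
        ≤ C * Ssum R β (⌈β⌉₊ + 2*m) w u := by
  have hsubR : Ioo (R/2) R ⊆ Ioo (0:ℝ) R := Ioo_subset_Ioo (by linarith) le_rfl
  have hβceil : β ≤ (⌈β⌉₊ : ℝ) := Nat.le_ceil β
  intro p
  induction p with
  | zero =>
      intro n d l hl hA hB hC hfuel
      exfalso
      have h1 : (n:ℝ) < β + (d:ℝ) + 2 := hA
      have h2 : (d:ℝ) ≤ (⌈β⌉₊:ℝ) + 2*(l:ℝ) := by exact_mod_cast hC
      have h3n : 2*⌈β⌉₊ + 2*m + 4 ≤ n := by omega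
      have h3 : ((2*⌈β⌉₊ + 2*m + 4 : ℕ):ℝ) ≤ (n:ℝ) := by exact_mod_cast h3n
      have h4 : (l:ℝ) ≤ (m:ℝ) := by exact_mod_cast hl
      push_cast at h3
      linarith
  | succ p ih =>
      intro n d l hl hA hB hC hfuel
      by_cases hdir : (β:ℝ) + d ≤ n
      · -- direct domination case
        have hdK : d ≤ ⌈β⌉₊ + 2*m := le_trans hC (by omega)
        set c : ℝ := (max R 1) ^ (2:ℝ) * (c₁ ^ (β + d))⁻¹ * ((R/2)^4)⁻¹ with hcdef
        have hcpos : 0 < c := by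
          have h1 : (0:ℝ) < (max R 1) ^ (2:ℝ) :=
            Real.rpow_pos_of_pos (lt_of_lt_of_le one_pos (le_max_right R 1)) _
          have h2 : (0:ℝ) < c₁ ^ (β + d) := Real.rpow_pos_of_pos hc₁ _
          have h3 : (0:ℝ) < (R/2)^4 := by positivity
          positivity
        refine ⟨c, hcpos, fun u hu hint => ?_⟩
        have hDcont : ContinuousOn (iteratedDeriv d u) (Ioo (0:ℝ) R) :=
          iter_continuousOn isOpen_Ioo hu d
        have hgc : ContinuousOn (fun r => (R - r) ^ (n:ℝ) * iteratedDeriv d u r ^ 2)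
            (Ioo (R/2) R) := by
          have heq : (fun r : ℝ => (R - r) ^ (n:ℝ)) = fun r : ℝ => (R - r) ^ (n:ℕ) := by
            funext r; exact Real.rpow_natCast _ n
          refine ContinuousOn.mul ?_ ((hDcont.mono hsubR).pow 2)
          rw [heq]
          exact ((continuous_const.sub continuous_id).pow n).continuousOn
        refine bound_by_S R β (⌈β⌉₊ + 2*m) w u hw_nn hint hdK measurableSet_Ioo hsubR
          hgc hcpos.le (fun x hx => ?_)
        have hx' : x ∈ Ioo (0:ℝ) R := hsubR hx
        have hRx : 0 < R - x := by linarith [hx.2]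
        have hwx : 0 ≤ w x := hw_nn x hx'
        have hnn : 0 ≤ (R - x) ^ (n:ℝ) := Real.rpow_nonneg hRx.le _
        constructor
        · positivity
        · -- (R-x)^n ≤ c * w^(β+d) * x^4  (times square)
          have step1 : (R - x) ^ (n:ℝ) = (R - x) ^ (β + d) * (R - x) ^ ((n:ℝ) - (β + d)) := by
            rw [← Real.rpow_add hRx]; ring_nf
          have step2 : (R - x) ^ ((n:ℝ) - (β + d)) ≤ (max R 1) ^ (2:ℝ) := by
            have h1 : (R - x) ^ ((n:ℝ) - (β + d)) ≤ (max R 1) ^ ((n:ℝ) - (β + d)) :=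
              Real.rpow_le_rpow hRx.le (by
                have : R - x ≤ R := by linarith [hx.1, hx'.1]
                exact le_trans this (le_max_left R 1)) (by linarith)
            refine le_trans h1 ?_
            refine Real.rpow_le_rpow_of_exponent_le (le_max_right R 1) ?_
            linarith
          have step3 : (R - x) ^ (β + d) ≤ (c₁ ^ (β + d))⁻¹ * w x ^ (β + d) := by
            have h1 : c₁ * (R - x) ≤ w x := hwl x hx'
            have h2 : (c₁ * (R - x)) ^ (β + d) ≤ w x ^ (β + d) :=
              Real.rpow_le_rpow (by positivity) h1 (by positivity)
            rw [Real.mul_rpow hc₁.le hRx.le] at h2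
            have h3 : (0:ℝ) < c₁ ^ (β + d) := Real.rpow_pos_of_pos hc₁ _
            calc (R - x) ^ (β + d) ≤ w x ^ (β + d) / c₁ ^ (β + d) := (le_div_iff₀' h3).mpr h2
              _ = (c₁ ^ (β + d))⁻¹ * w x ^ (β + d) := by ring
          have step4 : ((R/2):ℝ)^4 ≤ x^4 := by
            have : R/2 ≤ x := hx.1.le
            exact pow_le_pow_left₀ (by linarith) this 4
          have hD2 : (0:ℝ) ≤ iteratedDeriv d u x ^ 2 := sq_nonneg _
          have key : (R - x) ^ (n:ℝ) ≤ c * (w x ^ (β + d) * x ^ 4) := by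
            have h4 : (0:ℝ) < (R/2)^4 := by positivity
            have h5 : (0:ℝ) ≤ (max R 1) ^ (2:ℝ) := by positivity
            have h6 : (0:ℝ) ≤ (c₁ ^ (β + d))⁻¹ * w x ^ (β + d) := by
              have := Real.rpow_pos_of_pos hc₁ (β + d)
              positivity
            calc (R - x) ^ (n:ℝ)
                = (R - x) ^ (β + d) * (R - x) ^ ((n:ℝ) - (β + d)) := step1
              _ ≤ ((c₁ ^ (β + d))⁻¹ * w x ^ (β + d)) * (max R 1) ^ (2:ℝ) := by
                  refine mul_le_mul step3 step2 (Real.rpow_nonneg hRx.le _) h6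
              _ = (max R 1) ^ (2:ℝ) * (c₁ ^ (β + d))⁻¹ * (w x ^ (β + d) * 1) := by ring
              _ ≤ (max R 1) ^ (2:ℝ) * (c₁ ^ (β + d))⁻¹ *
                    (w x ^ (β + d) * (((R/2)^4)⁻¹ * x^4)) := by
                  have h7 : (1:ℝ) ≤ ((R/2)^4)⁻¹ * x^4 := by
                    rw [inv_mul_eq_div, le_div_iff₀ h4]
                    simpa using step4
                  have h8 : (0:ℝ) ≤ w x ^ (β + d) := Real.rpow_nonneg hwx _
                  have h9 : (0:ℝ) ≤ (max R 1) ^ (2:ℝ) * (c₁ ^ (β + d))⁻¹ := by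
                    have := Real.rpow_pos_of_pos hc₁ (β + d); positivity
                  refine mul_le_mul_of_nonneg_left ?_ h9
                  exact mul_le_mul_of_nonneg_left h7 h8
              _ = c * (w x ^ (β + d) * x ^ 4) := by rw [hcdef]; ring
          calc (R - x) ^ (n:ℝ) * iteratedDeriv d u x ^ 2
              ≤ (c * (w x ^ (β + d) * x ^ 4)) * iteratedDeriv d u x ^ 2 :=
                mul_le_mul_of_nonneg_right key hD2
            _ = c * (w x ^ (β + (d:ℕ)) * x ^ 4 * iteratedDeriv d u x ^ 2) := by ring
      · -- Hardy recursion case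
        push_neg at hdir
        have hA' : ((n+2:ℕ):ℝ) < β + d + 2 := by push_cast; push_cast at hdir; linarith
        have hA'' : ((n+2:ℕ):ℝ) < β + (d+1:ℕ) + 2 := by push_cast; push_cast at hdir; linarith
        have hB' : 2*d ≤ (n+2) + 2*l := by omega
        have hB'' : 2*(d+1) ≤ (n+2) + 2*l := by
          -- from 2d ≤ n + 2l
          omega
        have hC'' : d + 1 ≤ ⌈β⌉₊ + 2*l := by
          have h1 : (d:ℝ) < β + 2*l := by
            have h2 : (2*d:ℝ) ≤ (n:ℝ) + 2*l := by exact_mod_cast hB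
            push_cast at h2 ⊢
            linarith [hdir]
          have h2 : (d:ℝ) < (⌈β⌉₊:ℝ) + 2*(l:ℝ) := by linarith
          have h3 : d < ⌈β⌉₊ + 2*l := by exact_mod_cast h2
          omega
        have hfuel' : 2*⌈β⌉₊ + 2*m + 4 ≤ (n+2) + p := by omega
        obtain ⟨C₁, hC₁pos, h₁⟩ := ih (n+2) d l hl hA' hB' hC hfuel'
        obtain ⟨C₂, hC₂pos, h₂⟩ := ih (n+2) (d+1) l hl hA'' hB'' hC'' hfuel'
        obtain ⟨CH, hCHpos, hH⟩ := hardy_right R (R/2) (by linarith) ((n:ℝ)+2)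
          (by linarith [Nat.cast_nonneg (α := ℝ) n])
        refine ⟨CH * (C₁ + C₂), by positivity, fun u hu hint => ?_⟩
        obtain ⟨hi₁, hb₁⟩ := h₁ u hu hint
        obtain ⟨hi₂, hb₂⟩ := h₂ u hu hint
        have hcast : (fun r : ℝ => (R - r) ^ ((n+2:ℕ):ℝ)) =
            (fun r : ℝ => (R - r) ^ ((n:ℝ)+2)) := by
          funext r; congr 1; push_cast; ring
        have hf : ∀ x ∈ Ioo (R/2) R, HasDerivAt (iteratedDeriv d u)
            (iteratedDeriv (d+1) u x) x :=
          fun x hx => iter_hasDerivAt isOpen_Ioo hu d (hsubR hx)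
        have hf'c : ContinuousOn (iteratedDeriv (d+1) u) (Ioo (R/2) R) :=
          (iter_continuousOn isOpen_Ioo hu (d+1)).mono hsubR
        have hAin : IntegrableOn (fun x => (R - x) ^ ((n:ℝ)+2) * iteratedDeriv d u x ^ 2)
            (Ioo (R/2) R) := by
          refine hi₁.congr_fun (fun x hx => ?_) measurableSet_Ioo
          congr 2
          push_cast; ring
        have hDin : IntegrableOn (fun x => (R - x) ^ ((n:ℝ)+2) * iteratedDeriv (d+1) u x ^ 2)
            (Ioo (R/2) R) := by
          refine hi₂.congr_fun (fun x hx => ?_) measurableSet_Ioo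
          congr 2
          push_cast; ring
        obtain ⟨hout, hbout⟩ := hH (iteratedDeriv d u) (iteratedDeriv (d+1) u)
          hf hf'c hAin hDin
        have hcast2 : (fun x : ℝ => (R - x) ^ (((n:ℝ)+2)-2) * iteratedDeriv d u x ^ 2) =
            (fun x : ℝ => (R - x) ^ ((n:ℕ):ℝ) * iteratedDeriv d u x ^ 2) := by
          funext x; congr 2; ring
        constructor
        · rw [← hcast2]; exact hout
        · rw [← hcast2]
          refine le_trans hbout ?_
          have e1 : (∫ x in Ioo (R/2) R, (R - x) ^ ((n:ℝ)+2) * iteratedDeriv d u x ^ 2)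
              = ∫ x in Ioo (R/2) R, (R - x) ^ ((n+2:ℕ):ℝ) * iteratedDeriv d u x ^ 2 := by
            refine setIntegral_congr_fun measurableSet_Ioo (fun x _ => ?_)
            congr 2
            push_cast; ring
          have e2 : (∫ x in Ioo (R/2) R, (R - x) ^ ((n:ℝ)+2) * iteratedDeriv (d+1) u x ^ 2)
              = ∫ x in Ioo (R/2) R, (R - x) ^ ((n+2:ℕ):ℝ) * iteratedDeriv (d+1) u x ^ 2 := by
            refine setIntegral_congr_fun measurableSet_Ioo (fun x _ => ?_)
            congr 2
            push_cast; ring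
          calc CH * ((∫ x in Ioo (R/2) R, (R - x) ^ ((n:ℝ)+2) * iteratedDeriv d u x ^ 2)
                + ∫ x in Ioo (R/2) R, (R - x) ^ ((n:ℝ)+2) * iteratedDeriv (d+1) u x ^ 2)
              ≤ CH * (C₁ * Ssum R β (⌈β⌉₊ + 2*m) w u + C₂ * Ssum R β (⌈β⌉₊ + 2*m) w u) := by
                refine mul_le_mul_of_nonneg_left ?_ hCHpos.le
                rw [e1, e2]
                exact add_le_add hb₁ hb₂
            _ = CH * (C₁ + C₂) * Ssum R β (⌈β⌉₊ + 2*m) w u := by ring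


lemma rpow4_eq (x : ℝ) : x ^ (4:ℝ) = x ^ (4:ℕ) := by
  rw [show (4:ℝ) = ((4:ℕ):ℝ) by norm_num, Real.rpow_natCast]

lemma rpow2_eq (x : ℝ) : x ^ (2:ℝ) = x ^ (2:ℕ) := by
  rw [show (2:ℝ) = ((2:ℕ):ℝ) by norm_num, Real.rpow_natCast]

lemma near0_stage1 (R β c₁ : ℝ) (hR : 0 < R) (hβ : 0 < β) (hc₁ : 0 < c₁) (m : ℕ)
    (hm : 2 ≤ ⌈β⌉₊ + m) (w : ℝ → ℝ) (hw_nn : ∀ r ∈ Ioo (0:ℝ) R, 0 ≤ w r)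
    (hwl : ∀ r ∈ Ioo (0:ℝ) R, c₁ * (R - r) ≤ w r) :
    ∀ d : ℕ, d ≤ m + 1 →
    ∃ C > (0:ℝ), ∀ u : ℝ → ℝ, ContDiffOn ℝ (⊤ : ℕ∞) u (Ioo 0 R) →
      (∀ k ≤ ⌈β⌉₊ + 2*m, IntegrableOn
        (fun r => w r ^ (β + k) * r ^ 4 * iteratedDeriv k u r ^ 2) (Ioo (0:ℝ) R)) →
      IntegrableOn (fun x => x ^ (2:ℝ) * iteratedDeriv d u x ^ 2) (Ioo (0:ℝ) (R/2)) ∧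
      ∫ x in Ioo (0:ℝ) (R/2), x ^ (2:ℝ) * iteratedDeriv d u x ^ 2
        ≤ C * Ssum R β (⌈β⌉₊ + 2*m) w u := by
  intro d hd
  have hsub0 : Ioo (0:ℝ) (R/2) ⊆ Ioo (0:ℝ) R := Ioo_subset_Ioo le_rfl (by linarith)
  set θ : ℝ := min (c₁ * (R/2)) 1 with hθdef
  have hθpos : 0 < θ := lt_min (by positivity) one_pos
  have hθw : ∀ x ∈ Ioo (0:ℝ) (R/2), θ ≤ w x := by
    intro x hx
    have h1 : c₁ * (R - x) ≤ w x := hwl x (hsub0 hx)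
    have h2 : c₁ * (R/2) ≤ c₁ * (R - x) := by
      refine mul_le_mul_of_nonneg_left ?_ hc₁.le
      linarith [hx.2]
    exact le_trans (min_le_left _ _) (le_trans h2 h1)
  have hck : ∀ k : ℕ, (0:ℝ) < (θ ^ (β + k))⁻¹ := by
    intro k
    have := Real.rpow_pos_of_pos hθpos (β + k)
    positivity
  obtain ⟨CH, hCHpos, hH⟩ := hardy_left (R/2) (by linarith) 4 (by norm_num)
  refine ⟨CH * ((θ ^ (β + d))⁻¹ + (θ ^ (β + (d+1:ℕ)))⁻¹), by positivity, fun u hu hint => ?_⟩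
  have hq : ∀ k : ℕ, k ≤ ⌈β⌉₊ + 2*m →
      IntegrableOn (fun x => x ^ (4:ℝ) * iteratedDeriv k u x ^ 2) (Ioo (0:ℝ) (R/2)) ∧
      ∫ x in Ioo (0:ℝ) (R/2), x ^ (4:ℝ) * iteratedDeriv k u x ^ 2
        ≤ (θ ^ (β + k))⁻¹ * Ssum R β (⌈β⌉₊ + 2*m) w u := by
    intro k hk
    have hDk : ContinuousOn (iteratedDeriv k u) (Ioo (0:ℝ) R) :=
      iter_continuousOn isOpen_Ioo hu k
    refine bound_by_S R β (⌈β⌉₊ + 2*m) w u hw_nn hint hk measurableSet_Ioo hsub0 ?_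
      (hck k).le (fun x hx => ?_)
    · have heq : (fun x : ℝ => x ^ (4:ℝ) * iteratedDeriv k u x ^ 2) =
          (fun x : ℝ => x ^ (4:ℕ) * iteratedDeriv k u x ^ 2) := by
        funext x; rw [rpow4_eq]
      rw [heq]
      exact (continuous_pow 4).continuousOn.mul ((hDk.mono hsub0).pow 2)
    · have hx0 : (0:ℝ) < x := hx.1
      constructor
      · have : (0:ℝ) ≤ x ^ (4:ℝ) := Real.rpow_nonneg hx0.le _
        positivity
      · rw [rpow4_eq]
        have h1 : θ ^ (β + k) ≤ w x ^ (β + k) :=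
          Real.rpow_le_rpow hθpos.le (hθw x hx) (by positivity)
        have h2 : (1:ℝ) ≤ (θ ^ (β + k))⁻¹ * w x ^ (β + k) := by
          rw [inv_mul_eq_div, le_div_iff₀ (Real.rpow_pos_of_pos hθpos _)]
          simpa using h1
        have h3 : (0:ℝ) ≤ x ^ (4:ℕ) * iteratedDeriv k u x ^ 2 := by positivity
        calc x ^ (4:ℕ) * iteratedDeriv k u x ^ 2
            = 1 * (x ^ (4:ℕ) * iteratedDeriv k u x ^ 2) := (one_mul _).symm
          _ ≤ ((θ ^ (β + k))⁻¹ * w x ^ (β + k)) * (x ^ (4:ℕ) * iteratedDeriv k u x ^ 2) :=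
              mul_le_mul_of_nonneg_right h2 h3
          _ = (θ ^ (β + k))⁻¹ * (w x ^ (β + k) * x ^ 4 * iteratedDeriv k u x ^ 2) := by ring
  have hdK : d ≤ ⌈β⌉₊ + 2*m := by omega
  have hdK' : d + 1 ≤ ⌈β⌉₊ + 2*m := by omega
  obtain ⟨hiA, hbA⟩ := hq d hdK
  obtain ⟨hiD, hbD⟩ := hq (d+1) hdK'
  have hf : ∀ x ∈ Ioo (0:ℝ) (R/2), HasDerivAt (iteratedDeriv d u)
      (iteratedDeriv (d+1) u x) x :=
    fun x hx => iter_hasDerivAt isOpen_Ioo hu d (hsub0 hx)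
  have hf'c : ContinuousOn (iteratedDeriv (d+1) u) (Ioo (0:ℝ) (R/2)) :=
    (iter_continuousOn isOpen_Ioo hu (d+1)).mono hsub0
  obtain ⟨hout, hbout⟩ := hH (iteratedDeriv d u) (iteratedDeriv (d+1) u) hf hf'c hiA hiD
  have hcast : (fun x : ℝ => x ^ ((4:ℝ)-2) * iteratedDeriv d u x ^ 2) =
      (fun x : ℝ => x ^ (2:ℝ) * iteratedDeriv d u x ^ 2) := by
    funext x; norm_num
  constructor
  · rw [← hcast]; exact hout
  · rw [← hcast]
    refine le_trans hbout ?_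
    calc CH * ((∫ x in Ioo (0:ℝ) (R/2), x ^ (4:ℝ) * iteratedDeriv d u x ^ 2)
          + ∫ x in Ioo (0:ℝ) (R/2), x ^ (4:ℝ) * iteratedDeriv (d+1) u x ^ 2)
        ≤ CH * ((θ ^ (β + d))⁻¹ * Ssum R β (⌈β⌉₊ + 2*m) w u
          + (θ ^ (β + (d+1:ℕ)))⁻¹ * Ssum R β (⌈β⌉₊ + 2*m) w u) := by
          refine mul_le_mul_of_nonneg_left (add_le_add hbA hbD) hCHpos.le
      _ = CH * ((θ ^ (β + d))⁻¹ + (θ ^ (β + (d+1:ℕ)))⁻¹) * Ssum R β (⌈β⌉₊ + 2*m) w u := by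
          ring

lemma near0_stage2 (R β c₁ : ℝ) (hR : 0 < R) (hβ : 0 < β) (hc₁ : 0 < c₁) (m : ℕ)
    (hm : 2 ≤ ⌈β⌉₊ + m) (w : ℝ → ℝ) (hw_nn : ∀ r ∈ Ioo (0:ℝ) R, 0 ≤ w r)
    (hwl : ∀ r ∈ Ioo (0:ℝ) R, c₁ * (R - r) ≤ w r) :
    ∀ l : ℕ, l ≤ m →
    ∃ C > (0:ℝ), ∀ u : ℝ → ℝ, ContDiffOn ℝ (⊤ : ℕ∞) u (Ioo 0 R) →
      (∀ k ≤ ⌈β⌉₊ + 2*m, IntegrableOn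
        (fun r => w r ^ (β + k) * r ^ 4 * iteratedDeriv k u r ^ 2) (Ioo (0:ℝ) R)) →
      IntegrableOn (fun x => iteratedDeriv l u x ^ 2) (Ioo (0:ℝ) (R/2)) ∧
      ∫ x in Ioo (0:ℝ) (R/2), iteratedDeriv l u x ^ 2
        ≤ C * Ssum R β (⌈β⌉₊ + 2*m) w u := by
  intro l hl
  have hsub0 : Ioo (0:ℝ) (R/2) ⊆ Ioo (0:ℝ) R := Ioo_subset_Ioo le_rfl (by linarith)
  obtain ⟨C₁, hC₁pos, h₁⟩ := near0_stage1 R β c₁ hR hβ hc₁ m hm w hw_nn hwl l (by omega)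
  obtain ⟨C₂, hC₂pos, h₂⟩ := near0_stage1 R β c₁ hR hβ hc₁ m hm w hw_nn hwl (l+1) (by omega)
  obtain ⟨CH, hCHpos, hH⟩ := hardy_left (R/2) (by linarith) 2 le_rfl
  refine ⟨CH * (C₁ + C₂), by positivity, fun u hu hint => ?_⟩
  obtain ⟨hiA, hbA⟩ := h₁ u hu hint
  obtain ⟨hiD, hbD⟩ := h₂ u hu hint
  have hf : ∀ x ∈ Ioo (0:ℝ) (R/2), HasDerivAt (iteratedDeriv l u)
      (iteratedDeriv (l+1) u x) x :=
    fun x hx => iter_hasDerivAt isOpen_Ioo hu l (hsub0 hx)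
  have hf'c : ContinuousOn (iteratedDeriv (l+1) u) (Ioo (0:ℝ) (R/2)) :=
    (iter_continuousOn isOpen_Ioo hu (l+1)).mono hsub0
  obtain ⟨hout, hbout⟩ := hH (iteratedDeriv l u) (iteratedDeriv (l+1) u) hf hf'c hiA hiD
  have hcast : (fun x : ℝ => x ^ ((2:ℝ)-2) * iteratedDeriv l u x ^ 2) =
      (fun x : ℝ => iteratedDeriv l u x ^ 2) := by
    funext x
    norm_num
  constructor
  · rw [← hcast]; exact hout
  · rw [← hcast]
    refine le_trans hbout ?_
    calc CH * ((∫ x in Ioo (0:ℝ) (R/2), x ^ (2:ℝ) * iteratedDeriv l u x ^ 2)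
          + ∫ x in Ioo (0:ℝ) (R/2), x ^ (2:ℝ) * iteratedDeriv (l+1) u x ^ 2)
        ≤ CH * (C₁ * Ssum R β (⌈β⌉₊ + 2*m) w u + C₂ * Ssum R β (⌈β⌉₊ + 2*m) w u) :=
          mul_le_mul_of_nonneg_left (add_le_add hbA hbD) hCHpos.le
      _ = CH * (C₁ + C₂) * Ssum R β (⌈β⌉₊ + 2*m) w u := by ring


lemma per_l (R β c₁ : ℝ) (hR : 0 < R) (hβ : 0 < β) (hc₁ : 0 < c₁) (m : ℕ)
    (hm : 2 ≤ ⌈β⌉₊ + m) (w : ℝ → ℝ) (hw_nn : ∀ r ∈ Ioo (0:ℝ) R, 0 ≤ w r)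
    (hwl : ∀ r ∈ Ioo (0:ℝ) R, c₁ * (R - r) ≤ w r) :
    ∀ l : ℕ, ∃ C > (0:ℝ), l ≤ m → ∀ u : ℝ → ℝ, ContDiffOn ℝ (⊤ : ℕ∞) u (Ioo 0 R) →
      (∀ k ≤ ⌈β⌉₊ + 2*m, IntegrableOn
        (fun r => w r ^ (β + k) * r ^ 4 * iteratedDeriv k u r ^ 2) (Ioo (0:ℝ) R)) →
      IntegrableOn (fun x => iteratedDeriv l u x ^ 2) (Ioo (0:ℝ) R) ∧
      ∫ x in Ioo (0:ℝ) R, iteratedDeriv l u x ^ 2 ≤ C * Ssum R β (⌈β⌉₊ + 2*m) w u := by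
  intro l
  by_cases hl : l ≤ m
  swap
  · exact ⟨1, one_pos, fun h => absurd h hl⟩
  obtain ⟨C0, hC0pos, h0⟩ := near0_stage2 R β c₁ hR hβ hc₁ m hm w hw_nn hwl l hl
  obtain ⟨CR, hCRpos, hRb⟩ := chainR R β c₁ hR hβ hc₁ m w hw_nn hwl
    (2*⌈β⌉₊+2*m+4) 0 l l hl (by push_cast; positivity) (by omega) (by omega) (by omega)
  refine ⟨C0 + CR, by positivity, fun _ u hu hint => ?_⟩
  obtain ⟨hi0, hb0⟩ := h0 u hu hint
  obtain ⟨hiR, hbR⟩ := hRb u hu hint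
  have hcast : (fun r : ℝ => (R - r) ^ ((0:ℕ):ℝ) * iteratedDeriv l u r ^ 2) =
      (fun r : ℝ => iteratedDeriv l u r ^ 2) := by
    funext r; norm_num
  rw [hcast] at hiR hbR
  have hiIco : IntegrableOn (fun x => iteratedDeriv l u x ^ 2) (Ico (R/2) R) :=
    (integrableOn_Ico_iff_integrableOn_Ioo (f := fun x => iteratedDeriv l u x ^ 2)).mpr hiR
  have hunion : Ioo (0:ℝ) (R/2) ∪ Ico (R/2) R = Ioo (0:ℝ) R :=
    Ioo_union_Ico_eq_Ioo (by linarith) (by linarith)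
  have hi : IntegrableOn (fun x => iteratedDeriv l u x ^ 2) (Ioo (0:ℝ) R) := by
    rw [← hunion]; exact hi0.union hiIco
  refine ⟨hi, ?_⟩
  have hdisj : Disjoint (Ioo (0:ℝ) (R/2)) (Ico (R/2) R) :=
    disjoint_left.mpr (fun x hx hx' => absurd hx.2 (not_lt.mpr hx'.1))
  have hsplit : ∫ x in Ioo (0:ℝ) R, iteratedDeriv l u x ^ 2
      = (∫ x in Ioo (0:ℝ) (R/2), iteratedDeriv l u x ^ 2)
        + ∫ x in Ico (R/2) R, iteratedDeriv l u x ^ 2 := by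
    rw [← hunion]
    exact setIntegral_union hdisj measurableSet_Ico hi0 hiIco
  have hIcoIoo : (∫ x in Ico (R/2) R, iteratedDeriv l u x ^ 2)
      = ∫ x in Ioo (R/2) R, iteratedDeriv l u x ^ 2 :=
    integral_Ico_eq_integral_Ioo
  rw [hsplit, hIcoIoo]
  calc (∫ x in Ioo (0:ℝ) (R/2), iteratedDeriv l u x ^ 2)
        + ∫ x in Ioo (R/2) R, iteratedDeriv l u x ^ 2
      ≤ C0 * Ssum R β (⌈β⌉₊ + 2*m) w u + CR * Ssum R β (⌈β⌉₊ + 2*m) w u :=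
        add_le_add hb0 hbR
    _ = (C0 + CR) * Ssum R β (⌈β⌉₊ + 2*m) w u := by ring

/-- Weighted Sobolev embedding: for `β > 0` and `m ≥ 0` with `⌈β⌉ + m ≥ 2`,
`Σ_{l=0}^m ∫₀^R |∂_r^l u|² dr ≤ C Σ_{k=0}^{⌈β⌉+2m} ∫₀^R w^{β+k} r⁴ |∂_r^k u|² dr`;
in particular `u ∈ H^m(0,R)`. -/
theorem weighted_sobolev_embedding
    (α c R : ℝ) (hα : 3 < α) (hα' : α < 5) (hc : 0 < c) (hR : 0 < R)
    (w : ℝ → ℝ)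
    (hw_cont : ContinuousOn w (Set.Icc 0 R))
    (hw_smooth : ContDiffOn ℝ (⊤ : ℕ∞) w (Set.Ico 0 R))
    (hw0 : w 0 = 1) (hw'0 : deriv w 0 = 0)
    (hw_pos : ∀ r, 0 ≤ r → r < R → 0 < w r)
    (hwR : w R = 0)
    (hw_dec : ∀ r, 0 < r → r < R → deriv w r < 0)
    (hw_pv : ∃ w'R : ℝ, w'R < 0 ∧
      Filter.Tendsto (deriv w) (nhdsWithin R (Set.Iio R)) (nhds w'R))
    (hw_ode : ∀ r, 0 < r → r < R →
      deriv (deriv w) r + (2 / r) * deriv w r + c * w r ^ α = 0)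
    (β : ℝ) (hβ : 0 < β) (m : ℕ) (hm : 2 ≤ ⌈β⌉₊ + m) :
    ∃ C > (0:ℝ), ∀ u : ℝ → ℝ, ContDiffOn ℝ (⊤ : ℕ∞) u (Set.Ioo 0 R) →
      (∀ k ≤ ⌈β⌉₊ + 2 * m,
        MeasureTheory.IntegrableOn
          (fun r => w r ^ (β + k) * r ^ 4 * (iteratedDeriv k u r) ^ 2) (Set.Ioo 0 R)) →
      (∀ l ≤ m,
        MeasureTheory.IntegrableOn (fun r => (iteratedDeriv l u r) ^ 2) (Set.Ioo 0 R)) ∧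
      (∑ l ∈ Finset.range (m + 1), ∫ r in Set.Ioo (0:ℝ) R, (iteratedDeriv l u r) ^ 2) ≤
        C * ∑ k ∈ Finset.range (⌈β⌉₊ + 2 * m + 1),
          ∫ r in Set.Ioo (0:ℝ) R, w r ^ (β + k) * r ^ 4 * (iteratedDeriv k u r) ^ 2 := by
  obtain ⟨c₁, hc₁pos, hwl⟩ := w_lower R hR w hw_cont hw_smooth hw_pos hwR hw_pv
  have hw_nn : ∀ r ∈ Ioo (0:ℝ) R, 0 ≤ w r := fun r hr => (hw_pos r hr.1.le hr.2).le
  have key := per_l R β c₁ hR hβ hc₁pos m hm w hw_nn hwl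
  choose Cf hCfpos hCf using key
  set C : ℝ := ∑ l ∈ Finset.range (m+1), Cf l with hCdef
  have hCpos : 0 < C := by
    refine Finset.sum_pos (fun i _ => hCfpos i) ⟨0, by simp⟩
  refine ⟨C, hCpos, fun u hu hint => ?_⟩
  have hint' : ∀ k ≤ ⌈β⌉₊ + 2*m, IntegrableOn
      (fun r => w r ^ (β + k) * r ^ 4 * iteratedDeriv k u r ^ 2) (Ioo (0:ℝ) R) := hint
  constructor
  · exact fun l hl => (hCf l hl u hu hint').1
  · have hSeq : (∑ k ∈ Finset.range (⌈β⌉₊ + 2 * m + 1),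
        ∫ r in Set.Ioo (0:ℝ) R, w r ^ (β + k) * r ^ 4 * (iteratedDeriv k u r) ^ 2)
        = Ssum R β (⌈β⌉₊ + 2*m) w u := rfl
    rw [hSeq]
    calc (∑ l ∈ Finset.range (m + 1), ∫ r in Set.Ioo (0:ℝ) R, (iteratedDeriv l u r) ^ 2)
        ≤ ∑ l ∈ Finset.range (m + 1), Cf l * Ssum R β (⌈β⌉₊ + 2*m) w u := by
          refine Finset.sum_le_sum (fun l hl => ?_)
          exact (hCf l (by simp at hl; omega) u hu hint').2
      _ = C * Ssum R β (⌈β⌉₊ + 2*m) w u := by rw [hCdef, Finset.sum_mul]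
end

section
/- (Weighted L∞ embedding) Let 3 < α < 5, let w be a Lane-Emden enthalpy profile, and let β > 0 be real with ⌈β⌉ ≥ 1. Then there exists a constant C > 0 (depending on w and β but not on u) such that for every smooth u : (0,R) → ℝ with finite right-hand side: (sup_{0<r<R} |u(r)|)² ≤ C Σ_{k=0}^{⌈β⌉+2} ∫₀^R w^{β+k} r⁴ |(∂_r^k u)(r)|² dr; in particular u is bounded on (0,R). -/
open MeasureTheory Real Filter Set


private lemma cs_aux {a b c : ℝ} (ha : 0 ≤ a) (hb : 0 ≤ b) (hc : 0 ≤ c)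
    (h : ∀ t : ℝ, 0 < t → c ≤ (t * a + b / t) / 2) : c ≤ Real.sqrt a * Real.sqrt b := by
  have hgoal0 : c ≤ 0 → c ≤ Real.sqrt a * Real.sqrt b := by
    intro h0
    calc c ≤ 0 := h0
      _ ≤ _ := by positivity
  rcases eq_or_lt_of_le ha with ha0 | ha0
  · apply hgoal0
    by_contra hpos
    push_neg at hpos
    rcases eq_or_lt_of_le hb with hb0 | hb0
    · have := h 1 one_pos
      rw [← ha0, ← hb0] at this
      norm_num at this
      exact absurd this (not_le.2 hpos)
    · have := h (b / c) (by positivity)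
      rw [← ha0, mul_zero, zero_add] at this
      have e : b / (b / c) = c := by
        field_simp
      rw [e] at this
      linarith
  · rcases eq_or_lt_of_le hb with hb0 | hb0
    · apply hgoal0
      by_contra hpos
      push_neg at hpos
      have := h (c / a) (by positivity)
      rw [← hb0, div_mul_cancel₀ _ (ne_of_gt ha0)] at this
      norm_num at this
      nlinarith
    · have hsa : (0:ℝ) < Real.sqrt a := Real.sqrt_pos.2 ha0
      have hsb : (0:ℝ) < Real.sqrt b := Real.sqrt_pos.2 hb0
      have := h (Real.sqrt b / Real.sqrt a) (by positivity)
      have e1 : Real.sqrt b / Real.sqrt a * a = Real.sqrt a * Real.sqrt b := by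
        field_simp
        nlinarith [Real.sq_sqrt ha, Real.sq_sqrt hb]
      have e2 : b / (Real.sqrt b / Real.sqrt a) = Real.sqrt a * Real.sqrt b := by
        field_simp
        nlinarith [Real.sq_sqrt ha, Real.sq_sqrt hb]
      rw [e1, e2] at this
      linarith


private lemma interval_cs {f g : ℝ → ℝ} {x y : ℝ} (hxy : x ≤ y)
    (hf : ContinuousOn f (Set.Icc x y)) (hg : ContinuousOn g (Set.Icc x y)) :
    ∫ s in x..y, |f s * g s| ≤
      Real.sqrt (∫ s in x..y, (f s)^2) * Real.sqrt (∫ s in x..y, (g s)^2) := by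
  have huIcc : Set.uIcc x y = Set.Icc x y := Set.uIcc_of_le hxy
  have hf' : ContinuousOn f (Set.uIcc x y) := huIcc ▸ hf
  have hg' : ContinuousOn g (Set.uIcc x y) := huIcc ▸ hg
  have hif : IntervalIntegrable (fun s => (f s)^2) volume x y :=
    (hf'.pow 2).intervalIntegrable
  have hig : IntervalIntegrable (fun s => (g s)^2) volume x y :=
    (hg'.pow 2).intervalIntegrable
  have hifg : IntervalIntegrable (fun s => |f s * g s|) volume x y :=
    ((hf'.mul hg').abs).intervalIntegrable
  apply cs_aux
  · exact intervalIntegral.integral_nonneg hxy (fun s _ => sq_nonneg _)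
  · exact intervalIntegral.integral_nonneg hxy (fun s _ => sq_nonneg _)
  · exact intervalIntegral.integral_nonneg hxy (fun s _ => abs_nonneg _)
  · intro t ht
    have hpt : ∀ s ∈ Set.Icc x y, |f s * g s| ≤ (t * (f s)^2 + (g s)^2 / t) / 2 := by
      intro s _
      rw [abs_mul]
      have e : (t * (f s)^2 + (g s)^2 / t) / 2 = (t^2 * (f s)^2 + (g s)^2) / (2*t) := by
        field_simp
      rw [e, le_div_iff₀ (by positivity)]
      nlinarith [sq_nonneg (t * |f s| - |g s|), sq_abs (f s), sq_abs (g s),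
        abs_nonneg (f s), abs_nonneg (g s), ht]
    have hmono := intervalIntegral.integral_mono_on hxy hifg
      ((hif.const_mul t).add (hig.div_const t) |>.div_const 2) hpt
    calc ∫ s in x..y, |f s * g s| ≤ ∫ s in x..y, (t * (f s)^2 + (g s)^2 / t) / 2 := hmono
      _ = (t * (∫ s in x..y, (f s)^2) + (∫ s in x..y, (g s)^2) / t) / 2 := by
          rw [intervalIntegral.integral_div, intervalIntegral.integral_add
            (hif.const_mul t) (hig.div_const t), intervalIntegral.integral_const_mul,
            intervalIntegral.integral_div]
      _ ≤ _ := le_rfl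

private lemma integral_rpow_pos {x y p : ℝ} (hx : 0 < x) (hxy : x ≤ y) (hp : p ≠ -1) :
    ∫ s in x..y, s ^ p = (y ^ (p+1) - x ^ (p+1)) / (p+1) := by
  have hp1 : p + 1 ≠ 0 := fun h => hp (by linarith [h])
  have hder : ∀ s ∈ Set.uIcc x y, HasDerivAt (fun s : ℝ => s ^ (p+1) / (p+1)) (s ^ p) s := by
    intro s hs
    rw [Set.uIcc_of_le hxy] at hs
    have hs0 : s ≠ 0 := ne_of_gt (lt_of_lt_of_le hx hs.1)
    have h2 := (Real.hasDerivAt_rpow_const (p := p+1) (Or.inl hs0)).div_const (p+1)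
    have e : (p + 1) * s ^ (p + 1 - 1) / (p + 1) = s ^ p := by
      rw [mul_comm, mul_div_assoc, div_self hp1, mul_one]
      norm_num
    rw [e] at h2
    exact h2
  have hint : IntervalIntegrable (fun s => s ^ p) volume x y := by
    apply ContinuousOn.intervalIntegrable
    intro s hs
    rw [Set.uIcc_of_le hxy] at hs
    have hs0 : s ≠ 0 := ne_of_gt (lt_of_lt_of_le hx hs.1)
    exact (Real.continuousAt_rpow_const s p (Or.inl hs0)).continuousWithinAt
  rw [intervalIntegral.integral_eq_sub_of_hasDerivAt hder hint]
  ring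

private lemma integral_rpow_sub {R x y p : ℝ} (hxy : x ≤ y) (hyR : y < R) (hp : p ≠ -1) :
    ∫ s in x..y, (R - s) ^ p = ((R-x) ^ (p+1) - (R-y) ^ (p+1)) / (p+1) := by
  have hp1 : p + 1 ≠ 0 := fun h => hp (by linarith [h])
  have hder : ∀ s ∈ Set.uIcc x y,
      HasDerivAt (fun s : ℝ => -((R - s) ^ (p+1) / (p+1))) ((R - s) ^ p) s := by
    intro s hs
    rw [Set.uIcc_of_le hxy] at hs
    have hsR : s < R := lt_of_le_of_lt hs.2 hyR
    have hs0 : R - s ≠ 0 := ne_of_gt (by linarith)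
    have hinner : HasDerivAt (fun s : ℝ => R - s) (-1) s := by
      simpa using (hasDerivAt_id s).const_sub R
    have h1 := ((Real.hasDerivAt_rpow_const (p := p+1) (Or.inl hs0)).comp s hinner).div_const (p+1)
    have h2 := h1.neg
    have e : -((p + 1) * (R - s) ^ (p + 1 - 1) * -1 / (p + 1)) = (R - s) ^ p := by
      rw [mul_neg_one, neg_div, neg_neg, mul_comm, mul_div_assoc, div_self hp1, mul_one]
      norm_num
    rw [e] at h2
    exact h2
  have hint : IntervalIntegrable (fun s => (R - s) ^ p) volume x y := by
    apply ContinuousOn.intervalIntegrable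
    intro s hs
    rw [Set.uIcc_of_le hxy] at hs
    have hsR : s < R := lt_of_le_of_lt hs.2 hyR
    have hs0 : R - s ≠ 0 := ne_of_gt (by linarith)
    exact ((Real.continuousAt_rpow_const _ p (Or.inl hs0)).comp
      (by fun_prop : Continuous (fun s : ℝ => R - s)).continuousAt).continuousWithinAt
  rw [intervalIntegral.integral_eq_sub_of_hasDerivAt hder hint]
  ring

set_option maxHeartbeats 1600000 in
/-- Weighted L∞ embedding: for `β > 0` with `⌈β⌉ ≥ 1`,
`(sup_{0<r<R} |u(r)|)² ≤ C Σ_{k=0}^{⌈β⌉+2} ∫₀^R w^{β+k} r⁴ |∂_r^k u|² dr`;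
in particular `u` is bounded on `(0,R)`. -/
theorem weighted_Linfty_embedding
    (α c R : ℝ) (hα : 3 < α) (hα' : α < 5) (hc : 0 < c) (hR : 0 < R)
    (w : ℝ → ℝ)
    (hw_cont : ContinuousOn w (Set.Icc 0 R))
    (hw_smooth : ContDiffOn ℝ (⊤ : ℕ∞) w (Set.Ico 0 R))
    (hw0 : w 0 = 1) (hw'0 : deriv w 0 = 0)
    (hw_pos : ∀ r, 0 ≤ r → r < R → 0 < w r)
    (hwR : w R = 0)
    (hw_dec : ∀ r, 0 < r → r < R → deriv w r < 0)
    (hw_pv : ∃ w'R : ℝ, w'R < 0 ∧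
      Filter.Tendsto (deriv w) (nhdsWithin R (Set.Iio R)) (nhds w'R))
    (hw_ode : ∀ r, 0 < r → r < R →
      deriv (deriv w) r + (2 / r) * deriv w r + c * w r ^ α = 0)
    (β : ℝ) (hβ : 0 < β) (hβ1 : 1 ≤ ⌈β⌉₊) :
    ∃ C > (0:ℝ), ∀ u : ℝ → ℝ, ContDiffOn ℝ (⊤ : ℕ∞) u (Set.Ioo 0 R) →
      (∀ k ≤ ⌈β⌉₊ + 2,
        MeasureTheory.IntegrableOn
          (fun r => w r ^ (β + k) * r ^ 4 * (iteratedDeriv k u r) ^ 2) (Set.Ioo 0 R)) →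
      ∀ r ∈ Set.Ioo (0:ℝ) R,
        (u r) ^ 2 ≤ C * ∑ k ∈ Finset.range (⌈β⌉₊ + 3),
          ∫ s in Set.Ioo (0:ℝ) R, w s ^ (β + k) * s ^ 4 * (iteratedDeriv k u s) ^ 2 := by
  classical
  set N := ⌈β⌉₊ with hN
  have hN1 : 1 ≤ N := hβ1
  have hNβ : β ≤ (N:ℝ) := Nat.le_ceil β
  have hNβ' : (N:ℝ) < β + 1 := Nat.ceil_lt_add_one hβ.le
  set θ : ℝ := (β + 1 - N) / 2 with hθdef
  have hθ0 : 0 < θ := by rw [hθdef]; linarith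
  have hθ1 : θ ≤ 1/2 := by rw [hθdef]; linarith
  set a : ℝ := R/4 with hadef
  set b : ℝ := R/2 with hbdef
  have ha0 : 0 < a := by rw [hadef]; linarith
  have hab : a < b := by rw [hadef, hbdef]; linarith
  have hbR : b < R := by rw [hbdef]; linarith
  have hb0 : 0 < b := lt_trans ha0 hab
  have haR : a < R := lt_trans hab hbR
  set T : (ℝ → ℝ) → ℝ := fun u => ∑ k ∈ Finset.range (N+3),
    ∫ s in Set.Ioo (0:ℝ) R, w s ^ (β + k) * s ^ 4 * (iteratedDeriv k u s) ^ 2 with hTdef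
  have hiter : ∀ u : ℝ → ℝ, ContDiffOn ℝ (⊤ : ℕ∞) u (Set.Ioo 0 R) →
      ∀ j : ℕ, ContDiffOn ℝ (⊤ : ℕ∞) (iteratedDeriv j u) (Set.Ioo 0 R) := by
    intro u hu j
    induction j with
    | zero => simpa [iteratedDeriv_zero] using hu
    | succ j ih =>
      rw [iteratedDeriv_succ]
      exact ih.deriv_of_isOpen isOpen_Ioo (by simp)
  have hcont : ∀ u : ℝ → ℝ, ContDiffOn ℝ (⊤ : ℕ∞) u (Set.Ioo 0 R) →
      ∀ j : ℕ, ContinuousOn (iteratedDeriv j u) (Set.Ioo 0 R) :=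
    fun u hu j => (hiter u hu j).continuousOn
  have hderivAt : ∀ u : ℝ → ℝ, ContDiffOn ℝ (⊤ : ℕ∞) u (Set.Ioo 0 R) →
      ∀ j : ℕ, ∀ s ∈ Set.Ioo (0:ℝ) R,
        HasDerivAt (iteratedDeriv j u) (iteratedDeriv (j+1) u s) s := by
    intro u hu j s hs
    have h1 := (hiter u hu j).differentiableOn (by simp)
    have h2 : DifferentiableAt ℝ (iteratedDeriv j u) s :=
      (h1 s hs).differentiableAt (isOpen_Ioo.mem_nhds hs)
    rw [iteratedDeriv_succ]
    exact h2.hasDerivAt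
  have habs : ∀ u : ℝ → ℝ, ContDiffOn ℝ (⊤ : ℕ∞) u (Set.Ioo 0 R) →
      ∀ j : ℕ, ∀ x y : ℝ, 0 < x → x ≤ y → y < R →
        |iteratedDeriv j u y| ≤ |iteratedDeriv j u x| +
          ∫ s in x..y, |iteratedDeriv (j+1) u s| := by
    intro u hu j x y hx hxy hyR
    have hsub : Set.uIcc x y ⊆ Set.Ioo 0 R := by
      rw [Set.uIcc_of_le hxy]
      intro s hs
      exact ⟨lt_of_lt_of_le hx hs.1, lt_of_le_of_lt hs.2 hyR⟩
    have hder : ∀ s ∈ Set.uIcc x y,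
        HasDerivAt (iteratedDeriv j u) (iteratedDeriv (j+1) u s) s :=
      fun s hs => hderivAt u hu j s (hsub hs)
    have hcont' : ContinuousOn (iteratedDeriv (j+1) u) (Set.uIcc x y) :=
      (hcont u hu (j+1)).mono hsub
    have hii : IntervalIntegrable (iteratedDeriv (j+1) u) volume x y :=
      hcont'.intervalIntegrable
    have hftc := intervalIntegral.integral_eq_sub_of_hasDerivAt hder hii
    have h1 : iteratedDeriv j u y
        = iteratedDeriv j u x + ∫ s in x..y, iteratedDeriv (j+1) u s := by
      rw [hftc]; ring
    rw [h1]
    refine le_trans (abs_add_le _ _) ?_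
    gcongr
    exact intervalIntegral.abs_integral_le_integral_abs hxy
  have habs' : ∀ u : ℝ → ℝ, ContDiffOn ℝ (⊤ : ℕ∞) u (Set.Ioo 0 R) →
      ∀ j : ℕ, ∀ x y : ℝ, 0 < x → x ≤ y → y < R →
        |iteratedDeriv j u x| ≤ |iteratedDeriv j u y| +
          ∫ s in x..y, |iteratedDeriv (j+1) u s| := by
    intro u hu j x y hx hxy hyR
    have hsub : Set.uIcc x y ⊆ Set.Ioo 0 R := by
      rw [Set.uIcc_of_le hxy]
      intro s hs
      exact ⟨lt_of_lt_of_le hx hs.1, lt_of_le_of_lt hs.2 hyR⟩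
    have hder : ∀ s ∈ Set.uIcc x y,
        HasDerivAt (iteratedDeriv j u) (iteratedDeriv (j+1) u s) s :=
      fun s hs => hderivAt u hu j s (hsub hs)
    have hcont' : ContinuousOn (iteratedDeriv (j+1) u) (Set.uIcc x y) :=
      (hcont u hu (j+1)).mono hsub
    have hii : IntervalIntegrable (iteratedDeriv (j+1) u) volume x y :=
      hcont'.intervalIntegrable
    have hftc := intervalIntegral.integral_eq_sub_of_hasDerivAt hder hii
    have h1 : iteratedDeriv j u x
        = iteratedDeriv j u y - ∫ s in x..y, iteratedDeriv (j+1) u s := by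
      rw [hftc]; ring
    rw [h1]
    refine le_trans (abs_sub _ _) ?_
    gcongr
    exact intervalIntegral.abs_integral_le_integral_abs hxy
  have hterm_nonneg : ∀ u : ℝ → ℝ, ∀ k : ℕ,
      0 ≤ ∫ s in Set.Ioo (0:ℝ) R, w s ^ (β + k) * s ^ 4 * (iteratedDeriv k u s) ^ 2 := by
    intro u k
    apply MeasureTheory.setIntegral_nonneg measurableSet_Ioo
    intro s hs
    have hw := hw_pos s hs.1.le hs.2
    have hs4 : (0:ℝ) ≤ s ^ 4 := by positivity
    exact mul_nonneg (mul_nonneg (Real.rpow_nonneg hw.le _) hs4) (sq_nonneg _)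
  have hTnn : ∀ u : ℝ → ℝ, 0 ≤ T u := by
    intro u
    exact Finset.sum_nonneg (fun k _ => hterm_nonneg u k)
  have hsqTnn : ∀ u : ℝ → ℝ, 0 ≤ Real.sqrt (T u) := fun _ => Real.sqrt_nonneg _
  have hIleT : ∀ u : ℝ → ℝ,
      (∀ k ≤ N + 2, MeasureTheory.IntegrableOn
          (fun r => w r ^ (β + k) * r ^ 4 * (iteratedDeriv k u r) ^ 2) (Set.Ioo 0 R)) →
      ∀ k : ℕ, k ≤ N + 2 → ∀ x y : ℝ, 0 < x → x ≤ y → y < R →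
        ∫ s in x..y, w s ^ (β + k) * s ^ 4 * (iteratedDeriv k u s) ^ 2 ≤ T u := by
    intro u hint k hk x y hx hxy hyR
    have hsub : Set.Ioc x y ⊆ Set.Ioo 0 R :=
      fun s hs => ⟨lt_trans hx hs.1, lt_of_le_of_lt hs.2 hyR⟩
    have hnn : ∀ s ∈ Set.Ioo (0:ℝ) R,
        0 ≤ w s ^ (β + k) * s ^ 4 * (iteratedDeriv k u s) ^ 2 := by
      intro s hs
      have hw := hw_pos s hs.1.le hs.2
      have hs4 : (0:ℝ) ≤ s ^ 4 := by positivity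
      exact mul_nonneg (mul_nonneg (Real.rpow_nonneg hw.le _) hs4) (sq_nonneg _)
    rw [intervalIntegral.integral_of_le hxy]
    have h1 : ∫ s in Set.Ioc x y, w s ^ (β + k) * s ^ 4 * (iteratedDeriv k u s) ^ 2 ≤
        ∫ s in Set.Ioo (0:ℝ) R, w s ^ (β + k) * s ^ 4 * (iteratedDeriv k u s) ^ 2 := by
      apply MeasureTheory.setIntegral_mono_set (hint k hk)
      · exact (MeasureTheory.ae_restrict_iff' measurableSet_Ioo).2
          (Filter.Eventually.of_forall hnn)
      · exact HasSubset.Subset.eventuallyLE hsub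
    refine le_trans h1 ?_
    exact Finset.single_le_sum (f := fun i : ℕ => ∫ s in Set.Ioo (0:ℝ) R,
      w s ^ (β + i) * s ^ 4 * (iteratedDeriv i u s) ^ 2)
      (fun i _ => hterm_nonneg u i) (Finset.mem_range.2 (by omega))
  have hCS : ∀ u : ℝ → ℝ, ContDiffOn ℝ (⊤ : ℕ∞) u (Set.Ioo 0 R) →
      (∀ k ≤ N + 2, MeasureTheory.IntegrableOn
          (fun r => w r ^ (β + k) * r ^ 4 * (iteratedDeriv k u r) ^ 2) (Set.Ioo 0 R)) →
      ∀ k : ℕ, k ≤ N + 2 → ∀ x y : ℝ, 0 < x → x ≤ y → y < R →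
        ∫ s in x..y, |iteratedDeriv k u s| ≤ Real.sqrt (T u) *
          Real.sqrt (∫ s in x..y, w s ^ (-(β + k)) * s ^ (-4 : ℝ)) := by
    intro u hu hint k hk x y hx hxy hyR
    have hsub : Set.Icc x y ⊆ Set.Ioo 0 R :=
      fun s hs => ⟨lt_of_lt_of_le hx hs.1, lt_of_le_of_lt hs.2 hyR⟩
    have hwpos : ∀ s ∈ Set.Icc x y, 0 < w s :=
      fun s hs => hw_pos s (hsub hs).1.le (hsub hs).2
    have hspos : ∀ s ∈ Set.Icc x y, 0 < s := fun s hs => (hsub hs).1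
    set q : ℝ := (β + k) / 2 with hq
    set F : ℝ → ℝ := fun s => w s ^ q * s ^ (2:ℕ) * |iteratedDeriv k u s| with hF
    set G : ℝ → ℝ := fun s => w s ^ (-q) * s ^ (-(2:ℝ)) with hG
    have hwc : ContinuousOn w (Set.Icc x y) :=
      hw_cont.mono (fun s hs => ⟨(hsub hs).1.le, (hsub hs).2.le⟩)
    have hFc : ContinuousOn F (Set.Icc x y) := by
      apply ContinuousOn.mul
      apply ContinuousOn.mul
      · exact hwc.rpow_const (fun s hs => Or.inl (ne_of_gt (hwpos s hs)))
      · exact (continuous_pow 2).continuousOn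
      · exact ((hcont u hu k).mono hsub).abs
    have hGc : ContinuousOn G (Set.Icc x y) := by
      apply ContinuousOn.mul
      · exact hwc.rpow_const (fun s hs => Or.inl (ne_of_gt (hwpos s hs)))
      · exact continuousOn_id.rpow_const (fun s hs => Or.inl (ne_of_gt (hspos s hs)))
    have hFG : ∀ s ∈ Set.Icc x y, F s * G s = |iteratedDeriv k u s| := by
      intro s hs
      have hw1 : w s ^ q * w s ^ (-q) = 1 := by
        rw [← Real.rpow_add (hwpos s hs)]; simp
      have hs1 : (s:ℝ) ^ (2:ℕ) * s ^ (-(2:ℝ)) = 1 := by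
        rw [← Real.rpow_natCast s 2, ← Real.rpow_add (hspos s hs)]; norm_num
      calc F s * G s
          = (w s ^ q * w s ^ (-q)) * ((s:ℝ)^(2:ℕ) * s ^ (-(2:ℝ))) * |iteratedDeriv k u s| := by
            rw [hF, hG]; ring
        _ = |iteratedDeriv k u s| := by rw [hw1, hs1]; ring
    have hF2 : ∀ s ∈ Set.Icc x y,
        (F s)^2 = w s ^ (β + k) * s ^ 4 * (iteratedDeriv k u s)^2 := by
      intro s hs
      have hwq : (w s ^ q) ^ 2 = w s ^ (β + k) := by
        rw [sq, ← Real.rpow_add (hwpos s hs)]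
        congr 1
        rw [hq]; ring
      calc (F s)^2 = (w s ^ q)^2 * ((s:ℝ)^(2:ℕ))^2 * |iteratedDeriv k u s|^2 := by
            rw [hF]; ring
        _ = w s ^ (β + k) * s ^ 4 * (iteratedDeriv k u s)^2 := by
            rw [hwq, sq_abs, ← pow_mul]
    have hG2 : ∀ s ∈ Set.Icc x y,
        (G s)^2 = w s ^ (-(β + k)) * s ^ (-4 : ℝ) := by
      intro s hs
      have hwq : (w s ^ (-q)) ^ 2 = w s ^ (-(β + k)) := by
        rw [sq, ← Real.rpow_add (hwpos s hs)]
        congr 1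
        rw [hq]; ring
      have hsq : (s ^ (-(2:ℝ))) ^ 2 = s ^ (-4 : ℝ) := by
        rw [sq, ← Real.rpow_add (hspos s hs)]
        norm_num
      calc (G s)^2 = (w s ^ (-q))^2 * (s ^ (-(2:ℝ)))^2 := by rw [hG]; ring
        _ = w s ^ (-(β + k)) * s ^ (-4 : ℝ) := by rw [hwq, hsq]
    have huIcc : Set.uIcc x y = Set.Icc x y := Set.uIcc_of_le hxy
    calc ∫ s in x..y, |iteratedDeriv k u s|
        = ∫ s in x..y, |F s * G s| := by
          apply (intervalIntegral.integral_congr ?_).symm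
          intro s hs
          rw [huIcc] at hs
          simp only [hFG s hs, abs_abs]
      _ ≤ Real.sqrt (∫ s in x..y, (F s)^2) * Real.sqrt (∫ s in x..y, (G s)^2) :=
          interval_cs hxy hFc hGc
      _ = Real.sqrt (∫ s in x..y, w s ^ (β + k) * s ^ 4 * (iteratedDeriv k u s)^2) *
          Real.sqrt (∫ s in x..y, w s ^ (-(β + k)) * s ^ (-4 : ℝ)) := by
          rw [intervalIntegral.integral_congr (g := fun s =>
              w s ^ (β + k) * s ^ 4 * (iteratedDeriv k u s)^2)
              (fun s hs => hF2 s (huIcc ▸ hs)),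
            intervalIntegral.integral_congr (g := fun s =>
              w s ^ (-(β + k)) * s ^ (-4 : ℝ)) (fun s hs => hG2 s (huIcc ▸ hs))]
      _ ≤ Real.sqrt (T u) * Real.sqrt (∫ s in x..y, w s ^ (-(β + k)) * s ^ (-4 : ℝ)) :=
          mul_le_mul_of_nonneg_right
            (Real.sqrt_le_sqrt (hIleT u hint k hk x y hx hxy hyR)) (Real.sqrt_nonneg _)
  obtain ⟨W0, hW0pos, hW0le, hW0⟩ : ∃ W0 : ℝ, 0 < W0 ∧ W0 ≤ 1 ∧
      ∀ s ∈ Set.Icc (0:ℝ) b, W0 ≤ w s := by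
    have hsub : Set.Icc (0:ℝ) b ⊆ Set.Icc 0 R := Set.Icc_subset_Icc le_rfl hbR.le
    have hwc : ContinuousOn w (Set.Icc 0 b) := hw_cont.mono hsub
    obtain ⟨x₀, hx₀, hmin⟩ := isCompact_Icc.exists_isMinOn
      (Set.nonempty_Icc.2 hb0.le) hwc
    have hx₀pos : 0 < w x₀ := hw_pos x₀ hx₀.1 (lt_of_le_of_lt hx₀.2 hbR)
    refine ⟨min (w x₀) 1, lt_min hx₀pos one_pos, min_le_right _ _, ?_⟩
    intro s hs
    exact le_trans (min_le_left _ _) (hmin hs)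
  obtain ⟨m, hm0, hmlin⟩ : ∃ m : ℝ, 0 < m ∧ ∀ s, b ≤ s → s < R → m * (R - s) ≤ w s := by
    obtain ⟨w'R, hw'R, htend⟩ := hw_pv
    have hev : ∀ᶠ s in nhdsWithin R (Set.Iio R), deriv w s < w'R / 2 :=
      htend.eventually_lt_const (by linarith)
    obtain ⟨l₀, hl₀, hsubev⟩ := mem_nhdsLT_iff_exists_Ioo_subset.1 hev
    set l : ℝ := max l₀ b with hldef
    have hlR : l < R := max_lt hl₀ hbR
    have hbl : b ≤ l := le_max_right _ _
    have hKsub : Set.Icc b l ⊆ Set.Ioo 0 R :=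
      fun s hs => ⟨lt_of_lt_of_le hb0 hs.1, lt_of_le_of_lt hs.2 hlR⟩
    have hdW : ContDiffOn ℝ (⊤ : ℕ∞) (deriv w) (Set.Ioo 0 R) :=
      (hw_smooth.mono Set.Ioo_subset_Ico_self).deriv_of_isOpen isOpen_Ioo (by simp)
    have hdc : ContinuousOn (deriv w) (Set.Ioo 0 R) := hdW.continuousOn
    obtain ⟨x₁, hx₁, hmax⟩ := isCompact_Icc.exists_isMaxOn
      (Set.nonempty_Icc.2 hbl) (hdc.mono hKsub)
    have hx₁neg : deriv w x₁ < 0 :=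
      hw_dec x₁ (hKsub hx₁).1 (hKsub hx₁).2
    set m : ℝ := min (-(deriv w x₁)) (-(w'R / 2)) with hmdef
    have hm0 : 0 < m := lt_min (by linarith) (by linarith)
    have hdle : ∀ s, b ≤ s → s < R → deriv w s ≤ -m := by
      intro s hbs hsR
      rcases le_or_gt s l with h | h
      · have hmem : s ∈ Set.Icc b l := ⟨hbs, h⟩
        have h1 : deriv w s ≤ deriv w x₁ := hmax hmem
        have h2 : m ≤ -(deriv w x₁) := min_le_left _ _
        linarith
      · have hs' : s ∈ Set.Ioo l₀ R := ⟨lt_of_le_of_lt (le_max_left l₀ b) h, hsR⟩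
        have := hsubev hs'
        have h2 : m ≤ -(w'R / 2) := min_le_right _ _
        simp only [Set.mem_setOf_eq] at this
        linarith
    refine ⟨m, hm0, ?_⟩
    intro s hbs hsR
    have hwd : ∀ x ∈ Set.Ioo s R, HasDerivAt w (deriv w x) x := by
      intro x hx
      have hx' : x ∈ Set.Ioo (0:ℝ) R := ⟨lt_trans (lt_of_lt_of_le hb0 hbs) hx.1, hx.2⟩
      have hd : DifferentiableAt ℝ w x :=
        ((hw_smooth.mono Set.Ioo_subset_Ico_self).differentiableOn (by simp) x
          hx').differentiableAt (isOpen_Ioo.mem_nhds hx')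
      exact hd.hasDerivAt
    have hcw : ContinuousOn w (Set.Icc s R) :=
      hw_cont.mono (Set.Icc_subset_Icc (le_trans hb0.le hbs) le_rfl)
    obtain ⟨ξ, hξ, hslope⟩ := exists_hasDerivAt_eq_slope w (deriv w) hsR hcw hwd
    have hξle : deriv w ξ ≤ -m := hdle ξ (le_trans hbs hξ.1.le) hξ.2
    rw [hwR] at hslope
    have hRs : 0 < R - s := by linarith
    have : (0 - w s) / (R - s) ≤ -m := by rw [hslope] at hξle; exact hξle
    rw [div_le_iff₀ hRs] at this
    linarith
  obtain ⟨c2, hc20, hL2⟩ : ∃ c2 : ℝ, 0 < c2 ∧ ∀ u : ℝ → ℝ, ContDiffOn ℝ (⊤ : ℕ∞) u (Set.Ioo 0 R) →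
      (∀ k ≤ N + 2, MeasureTheory.IntegrableOn
          (fun r => w r ^ (β + k) * r ^ 4 * (iteratedDeriv k u r) ^ 2) (Set.Ioo 0 R)) →
      ∀ j : ℕ, j ≤ N + 2 →
        ∫ s in a..b, (iteratedDeriv j u s) ^ 2 ≤ c2 * T u := by
    have he : (0:ℝ) < W0 ^ (β + ((N:ℝ) + 2)) * a ^ 4 :=
      mul_pos (Real.rpow_pos_of_pos hW0pos _) (pow_pos ha0 4)
    refine ⟨(W0 ^ (β + ((N:ℝ) + 2)) * a ^ 4)⁻¹, inv_pos.2 he, ?_⟩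
    intro u hu hint j hj
    set δ : ℝ := W0 ^ (β + ((N:ℝ) + 2)) * a ^ 4 with hδ
    have hsubJ : Set.Icc a b ⊆ Set.Ioo 0 R :=
      fun s hs => ⟨lt_of_lt_of_le ha0 hs.1, lt_of_le_of_lt hs.2 hbR⟩
    have hwcab : ContinuousOn w (Set.Icc a b) :=
      hw_cont.mono (fun s hs => ⟨(hsubJ hs).1.le, (hsubJ hs).2.le⟩)
    have hfc : ContinuousOn (iteratedDeriv j u) (Set.Icc a b) := (hcont u hu j).mono hsubJ
    have hpt : ∀ s ∈ Set.Icc a b, δ * (iteratedDeriv j u s)^2 ≤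
        w s ^ (β + j) * s ^ 4 * (iteratedDeriv j u s)^2 := by
      intro s hs
      have hws : W0 ≤ w s := hW0 s ⟨le_trans ha0.le hs.1, hs.2⟩
      have hj0 : (0:ℝ) ≤ (j:ℝ) := Nat.cast_nonneg j
      have h1 : W0 ^ (β + ((N:ℝ)+2)) ≤ W0 ^ (β + (j:ℝ)) := by
        apply Real.rpow_le_rpow_of_exponent_ge hW0pos hW0le
        have : (j:ℝ) ≤ (N:ℝ) + 2 := by exact_mod_cast (by omega : j ≤ N + 2)
        linarith
      have h2 : W0 ^ (β + (j:ℝ)) ≤ w s ^ (β + (j:ℝ)) :=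
        Real.rpow_le_rpow hW0pos.le hws (by linarith)
      have h3 : a ^ 4 ≤ s ^ 4 := pow_le_pow_left₀ ha0.le hs.1 4
      have h5 : δ ≤ w s ^ (β + (j:ℝ)) * s ^ 4 := by
        calc δ = W0 ^ (β + ((N:ℝ)+2)) * a^4 := rfl
          _ ≤ W0 ^ (β + (j:ℝ)) * s ^ 4 :=
              mul_le_mul h1 h3 (by positivity) (Real.rpow_nonneg hW0pos.le _)
          _ ≤ w s ^ (β + (j:ℝ)) * s ^ 4 :=
              mul_le_mul_of_nonneg_right h2 (by positivity)
      exact mul_le_mul_of_nonneg_right h5 (sq_nonneg _)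
    have huIccab : Set.uIcc a b = Set.Icc a b := Set.uIcc_of_le hab.le
    have hII1 : IntervalIntegrable (fun s => (iteratedDeriv j u s)^2) volume a b :=
      (huIccab ▸ (hfc.pow 2)).intervalIntegrable
    have hII2 : IntervalIntegrable
        (fun s => w s ^ (β + j) * s ^ 4 * (iteratedDeriv j u s)^2) volume a b := by
      apply ContinuousOn.intervalIntegrable
      rw [huIccab]
      exact ((hwcab.rpow_const (fun s hs =>
        Or.inl (ne_of_gt (hw_pos s (hsubJ hs).1.le (hsubJ hs).2)))).mul
        ((continuous_pow 4).continuousOn)).mul (hfc.pow 2)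
    have key : δ * ∫ s in a..b, (iteratedDeriv j u s)^2 ≤ T u := by
      have h6 : ∫ s in a..b, δ * (iteratedDeriv j u s)^2 ≤
          ∫ s in a..b, w s ^ (β + j) * s^4 * (iteratedDeriv j u s)^2 :=
        intervalIntegral.integral_mono_on hab.le (hII1.const_mul δ) hII2 hpt
      rw [intervalIntegral.integral_const_mul] at h6
      exact le_trans h6 (hIleT u hint j hj a b ha0 hab.le hbR)
    calc ∫ s in a..b, (iteratedDeriv j u s)^2
        = δ⁻¹ * (δ * ∫ s in a..b, (iteratedDeriv j u s)^2) := by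
          field_simp
      _ ≤ δ⁻¹ * T u := mul_le_mul_of_nonneg_left key (inv_nonneg.2 he.le)
  obtain ⟨c3, hc30, hDb⟩ : ∃ c3 : ℝ, 0 < c3 ∧ ∀ u : ℝ → ℝ, ContDiffOn ℝ (⊤ : ℕ∞) u (Set.Ioo 0 R) →
      (∀ k ≤ N + 2, MeasureTheory.IntegrableOn
          (fun r => w r ^ (β + k) * r ^ 4 * (iteratedDeriv k u r) ^ 2) (Set.Ioo 0 R)) →
      ∀ j : ℕ, j ≤ N + 1 → ∀ x ∈ Set.Icc a b,
        |iteratedDeriv j u x| ≤ c3 * Real.sqrt (T u) := by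
    have hba : (0:ℝ) < b - a := by linarith
    refine ⟨Real.sqrt ((b - a)⁻¹ * c2 + 2 * c2) + 1, by positivity, ?_⟩
    intro u hu hint j hj x hx
    have hsubJ : Set.Icc a b ⊆ Set.Ioo 0 R :=
      fun s hs => ⟨lt_of_lt_of_le ha0 hs.1, lt_of_le_of_lt hs.2 hbR⟩
    have hfc : ContinuousOn (iteratedDeriv j u) (Set.Icc a b) := (hcont u hu j).mono hsubJ
    have hfc' : ContinuousOn (iteratedDeriv (j+1) u) (Set.Icc a b) :=
      (hcont u hu (j+1)).mono hsubJ
    have hgc : ContinuousOn (fun s => (iteratedDeriv j u s)^2) (Set.Icc a b) := hfc.pow 2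
    obtain ⟨y, hy, hmin⟩ := isCompact_Icc.exists_isMinOn (Set.nonempty_Icc.2 hab.le) hgc
    have huIccab : Set.uIcc a b = Set.Icc a b := Set.uIcc_of_le hab.le
    have hgint : IntervalIntegrable (fun s => (iteratedDeriv j u s)^2) volume a b :=
      (huIccab ▸ hgc).intervalIntegrable
    have h1 : (b - a) * (iteratedDeriv j u y)^2 ≤ ∫ s in a..b, (iteratedDeriv j u s)^2 := by
      have h0 := intervalIntegral.integral_mono_on hab.le intervalIntegrable_const hgint
        (fun s hs => hmin hs)
      rwa [intervalIntegral.integral_const, smul_eq_mul] at h0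
    have hfy : (iteratedDeriv j u y)^2 ≤ (b-a)⁻¹ * c2 * T u := by
      calc (iteratedDeriv j u y)^2 = (b-a)⁻¹ * ((b-a) * (iteratedDeriv j u y)^2) := by
            field_simp
        _ ≤ (b-a)⁻¹ * (c2 * T u) := mul_le_mul_of_nonneg_left
            (le_trans h1 (hL2 u hu hint j (by omega))) (inv_nonneg.2 hba.le)
        _ = (b-a)⁻¹ * c2 * T u := by ring
    have hder2 : ∀ s ∈ Set.Ioo (0:ℝ) R, HasDerivAt (fun t => (iteratedDeriv j u t)^2)
        (2 * iteratedDeriv j u s * iteratedDeriv (j+1) u s) s := by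
      intro s hs
      have h0 := (hderivAt u hu j s hs).pow 2
      norm_num at h0
      exact h0
    have habsint : IntervalIntegrable
        (fun s => |2 * iteratedDeriv j u s * iteratedDeriv (j+1) u s|) volume a b := by
      apply ContinuousOn.intervalIntegrable
      rw [huIccab]
      exact (((continuous_const.continuousOn).mul hfc).mul hfc').abs
    have hintb : ∫ s in a..b, |2 * iteratedDeriv j u s * iteratedDeriv (j+1) u s| ≤
        2 * c2 * T u := by
      have hpt2 : ∀ s ∈ Set.Icc a b, |2 * iteratedDeriv j u s * iteratedDeriv (j+1) u s| ≤
          (iteratedDeriv j u s)^2 + (iteratedDeriv (j+1) u s)^2 := by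
        intro s _
        rw [abs_mul, abs_mul, abs_two]
        nlinarith [sq_nonneg (|iteratedDeriv j u s| - |iteratedDeriv (j+1) u s|),
          sq_abs (iteratedDeriv j u s), sq_abs (iteratedDeriv (j+1) u s),
          abs_nonneg (iteratedDeriv j u s), abs_nonneg (iteratedDeriv (j+1) u s)]
      have hgint' : IntervalIntegrable (fun s => (iteratedDeriv (j+1) u s)^2) volume a b :=
        (huIccab ▸ (hfc'.pow 2)).intervalIntegrable
      have h7 := intervalIntegral.integral_mono_on hab.le habsint (hgint.add hgint') hpt2
      rw [intervalIntegral.integral_add hgint hgint'] at h7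
      have h8 := hL2 u hu hint j (by omega)
      have h9 := hL2 u hu hint (j+1) (by omega)
      calc ∫ s in a..b, |2 * iteratedDeriv j u s * iteratedDeriv (j+1) u s|
          ≤ (∫ s in a..b, (iteratedDeriv j u s)^2) +
            ∫ s in a..b, (iteratedDeriv (j+1) u s)^2 := h7
        _ ≤ c2 * T u + c2 * T u := add_le_add h8 h9
        _ = 2 * c2 * T u := by ring
    have hgx : (iteratedDeriv j u x)^2 ≤ ((b-a)⁻¹ * c2 + 2 * c2) * T u := by
      rcases le_total y x with hyx | hyx
      · have hsub2 : Set.uIcc y x ⊆ Set.Ioo 0 R := by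
          rw [Set.uIcc_of_le hyx]
          exact fun s hs => hsubJ ⟨le_trans hy.1 hs.1, le_trans hs.2 hx.2⟩
        have hftc := intervalIntegral.integral_eq_sub_of_hasDerivAt
          (f := fun t => (iteratedDeriv j u t)^2)
          (fun s hs => hder2 s (hsub2 hs))
          (by
            apply ContinuousOn.intervalIntegrable
            exact ((continuous_const.continuousOn.mul ((hcont u hu j).mono hsub2)).mul
              ((hcont u hu (j+1)).mono hsub2)))
        have h10 : ∫ s in y..x, 2 * iteratedDeriv j u s * iteratedDeriv (j+1) u s ≤
            2 * c2 * T u := by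
          refine le_trans (le_trans (le_abs_self _)
            (intervalIntegral.abs_integral_le_integral_abs hyx)) ?_
          refine le_trans (intervalIntegral.integral_mono_interval hy.1 hyx hx.2 ?_ ?_) hintb
          · exact Filter.Eventually.of_forall (fun s => abs_nonneg _)
          · exact habsint
        beta_reduce at hftc
        nlinarith [hftc, hfy]
      · have hsub2 : Set.uIcc x y ⊆ Set.Ioo 0 R := by
          rw [Set.uIcc_of_le hyx]
          exact fun s hs => hsubJ ⟨le_trans hx.1 hs.1, le_trans hs.2 hy.2⟩
        have hftc := intervalIntegral.integral_eq_sub_of_hasDerivAt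
          (f := fun t => (iteratedDeriv j u t)^2)
          (fun s hs => hder2 s (hsub2 hs))
          (by
            apply ContinuousOn.intervalIntegrable
            exact ((continuous_const.continuousOn.mul ((hcont u hu j).mono hsub2)).mul
              ((hcont u hu (j+1)).mono hsub2)))
        have h10 : -(2 * c2 * T u) ≤
            ∫ s in x..y, 2 * iteratedDeriv j u s * iteratedDeriv (j+1) u s := by
          rw [neg_le]
          refine le_trans (le_trans (neg_le_abs _)
            (intervalIntegral.abs_integral_le_integral_abs hyx)) ?_
          refine le_trans (intervalIntegral.integral_mono_interval hx.1 hyx hy.2 ?_ ?_) hintb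
          · exact Filter.Eventually.of_forall (fun s => abs_nonneg _)
          · exact habsint
        beta_reduce at hftc
        nlinarith [hftc, hfy]
    have habs2 : |iteratedDeriv j u x| = Real.sqrt ((iteratedDeriv j u x)^2) :=
      (Real.sqrt_sq_eq_abs _).symm
    rw [habs2]
    calc Real.sqrt ((iteratedDeriv j u x)^2)
        ≤ Real.sqrt (((b-a)⁻¹ * c2 + 2 * c2) * T u) := Real.sqrt_le_sqrt hgx
      _ = Real.sqrt ((b-a)⁻¹ * c2 + 2 * c2) * Real.sqrt (T u) :=
          Real.sqrt_mul (by positivity) _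
      _ ≤ (Real.sqrt ((b-a)⁻¹ * c2 + 2 * c2) + 1) * Real.sqrt (T u) := by
          have := Real.sqrt_nonneg (T u)
          nlinarith
  obtain ⟨c5, hc50, hNear0⟩ : ∃ c5 : ℝ, 0 < c5 ∧ ∀ u : ℝ → ℝ, ContDiffOn ℝ (⊤ : ℕ∞) u (Set.Ioo 0 R) →
      (∀ k ≤ N + 2, MeasureTheory.IntegrableOn
          (fun r => w r ^ (β + k) * r ^ 4 * (iteratedDeriv k u r) ^ 2) (Set.Ioo 0 R)) →
      ∀ r : ℝ, 0 < r → r ≤ a → |u r| ≤ c5 * Real.sqrt (T u) := by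
    have h3N : (3:ℕ) ≤ N + 2 := by omega
    have hG3 : ∀ x y : ℝ, 0 < x → x ≤ y → y ≤ b →
        ∫ s in x..y, w s ^ (-(β + ((3:ℕ):ℝ))) * s ^ (-4:ℝ) ≤
          W0 ^ (-(β + 3)) * (x ^ (-3:ℝ) / 3) := by
      intro x y hx hxy hyb
      have hyR : y < R := lt_of_le_of_lt hyb hbR
      have hsub : Set.Icc x y ⊆ Set.Ioo 0 R :=
        fun s hs => ⟨lt_of_lt_of_le hx hs.1, lt_of_le_of_lt hs.2 hyR⟩
      have hpt : ∀ s ∈ Set.Icc x y, w s ^ (-(β + ((3:ℕ):ℝ))) * s ^ (-4:ℝ) ≤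
          W0 ^ (-(β+3)) * s ^ (-4:ℝ) := by
        intro s hs
        have hws : W0 ≤ w s := hW0 s ⟨(hsub hs).1.le, le_trans hs.2 hyb⟩
        have h1 : w s ^ (-(β + ((3:ℕ):ℝ))) ≤ W0 ^ (-(β+3)) := by
          have h33 : ((3:ℕ):ℝ) = (3:ℝ) := by norm_num
          rw [h33]
          exact Real.rpow_le_rpow_of_nonpos hW0pos hws (by linarith)
        exact mul_le_mul_of_nonneg_right h1 (Real.rpow_nonneg (hsub hs).1.le _)
      have hII1 : IntervalIntegrable
          (fun s => w s ^ (-(β + ((3:ℕ):ℝ))) * s ^ (-4:ℝ)) volume x y := by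
        apply ContinuousOn.intervalIntegrable
        rw [Set.uIcc_of_le hxy]
        exact ((hw_cont.mono (fun s hs => ⟨(hsub hs).1.le, (hsub hs).2.le⟩)).rpow_const
          (fun s hs => Or.inl (ne_of_gt (hw_pos s (hsub hs).1.le (hsub hs).2)))).mul
          (continuousOn_id.rpow_const (fun s hs => Or.inl (ne_of_gt (hsub hs).1)))
      have hII2 : IntervalIntegrable (fun s => W0 ^ (-(β+3)) * s ^ (-4:ℝ)) volume x y := by
        apply ContinuousOn.intervalIntegrable
        rw [Set.uIcc_of_le hxy]
        exact continuous_const.continuousOn.mul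
          (continuousOn_id.rpow_const (fun s hs => Or.inl (ne_of_gt (hsub hs).1)))
      have h2 := intervalIntegral.integral_mono_on hxy hII1 hII2 hpt
      rw [intervalIntegral.integral_const_mul] at h2
      have h3 : ∫ s in x..y, s ^ (-4:ℝ) ≤ x ^ (-3:ℝ) / 3 := by
        rw [integral_rpow_pos hx hxy (by norm_num : (-4:ℝ) ≠ -1)]
        have he4 : (-4:ℝ) + 1 = -3 := by norm_num
        rw [he4]
        have hy3 : (0:ℝ) ≤ y ^ (-3:ℝ) := Real.rpow_nonneg (le_trans hx.le hxy) _
        have hx3 : (0:ℝ) ≤ x ^ (-3:ℝ) := Real.rpow_nonneg hx.le _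
        linarith
      exact le_trans h2 (mul_le_mul_of_nonneg_left h3 (Real.rpow_nonneg hW0pos.le _))
    obtain ⟨c6, hc60, hstep1⟩ : ∃ c6 : ℝ, 0 < c6 ∧
        ∀ u : ℝ → ℝ, ContDiffOn ℝ (⊤ : ℕ∞) u (Set.Ioo 0 R) →
        (∀ k ≤ N + 2, MeasureTheory.IntegrableOn
            (fun r => w r ^ (β + k) * r ^ 4 * (iteratedDeriv k u r) ^ 2) (Set.Ioo 0 R)) →
        ∀ t : ℝ, 0 < t → t ≤ a →
          |iteratedDeriv 2 u t| ≤ c6 * Real.sqrt (T u) * t ^ (-(3/2) : ℝ) := by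
      set κ : ℝ := Real.sqrt (W0 ^ (-(β+3)) / 3) with hκ
      refine ⟨c3 * a ^ ((3:ℝ)/2) + κ + 1, by positivity, ?_⟩
      intro u hu hint t ht hta
      have hT := hsqTnn u
      have h1 := habs' u hu 2 t a ht hta haR
      have h2 : |iteratedDeriv 2 u a| ≤ c3 * Real.sqrt (T u) :=
        hDb u hu hint 2 (by omega) a ⟨le_rfl, hab.le⟩
      have h3 := hCS u hu hint 3 h3N t a ht hta haR
      have h5 : Real.sqrt (∫ s in t..a, w s ^ (-(β + ((3:ℕ):ℝ))) * s ^ (-4:ℝ)) ≤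
          κ * t ^ (-(3/2):ℝ) := by
        refine le_trans (Real.sqrt_le_sqrt (hG3 t a ht hta hab.le)) ?_
        rw [show W0 ^ (-(β+3)) * (t ^ (-3:ℝ)/3) = (W0 ^ (-(β+3)) / 3) * t ^ (-3:ℝ) by ring]
        rw [Real.sqrt_mul (by positivity) _]
        have h6 : Real.sqrt (t ^ (-3:ℝ)) = t ^ (-(3/2):ℝ) := by
          rw [Real.sqrt_eq_rpow, ← Real.rpow_mul ht.le]
          norm_num
        rw [h6]
      have habsorb : (1:ℝ) ≤ a ^ ((3:ℝ)/2) * t ^ (-(3/2):ℝ) := by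
        have h7 : a ^ (-(3/2):ℝ) ≤ t ^ (-(3/2):ℝ) :=
          Real.rpow_le_rpow_of_nonpos ht hta (by norm_num)
        have h8 : a ^ ((3:ℝ)/2) * a ^ (-(3/2):ℝ) = 1 := by
          rw [← Real.rpow_add ha0]; norm_num
        calc (1:ℝ) = a ^ ((3:ℝ)/2) * a ^ (-(3/2):ℝ) := h8.symm
          _ ≤ a ^ ((3:ℝ)/2) * t ^ (-(3/2):ℝ) :=
              mul_le_mul_of_nonneg_left h7 (Real.rpow_nonneg ha0.le _)
      have ht32 : (0:ℝ) ≤ t ^ (-(3/2):ℝ) := Real.rpow_nonneg ht.le _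
      calc |iteratedDeriv 2 u t|
          ≤ c3 * Real.sqrt (T u) + Real.sqrt (T u) * (κ * t ^ (-(3/2):ℝ)) := by
            have h9 := mul_le_mul_of_nonneg_left h5 hT
            linarith [le_trans h1 (add_le_add h2 (le_trans h3 h9))]
        _ = c3 * Real.sqrt (T u) * 1 + κ * Real.sqrt (T u) * t ^ (-(3/2):ℝ) := by ring
        _ ≤ c3 * Real.sqrt (T u) * (a ^ ((3:ℝ)/2) * t ^ (-(3/2):ℝ)) +
            κ * Real.sqrt (T u) * t ^ (-(3/2):ℝ) :=
            add_le_add_left (mul_le_mul_of_nonneg_left habsorb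
              (mul_nonneg hc30.le hT)) _
        _ = (c3 * a ^ ((3:ℝ)/2) + κ) * Real.sqrt (T u) * t ^ (-(3/2):ℝ) := by ring
        _ ≤ (c3 * a ^ ((3:ℝ)/2) + κ + 1) * Real.sqrt (T u) * t ^ (-(3/2):ℝ) := by
            nlinarith [mul_nonneg hT ht32]
    obtain ⟨c7, hc70, hstep2⟩ : ∃ c7 : ℝ, 0 < c7 ∧
        ∀ u : ℝ → ℝ, ContDiffOn ℝ (⊤ : ℕ∞) u (Set.Ioo 0 R) →
        (∀ k ≤ N + 2, MeasureTheory.IntegrableOn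
            (fun r => w r ^ (β + k) * r ^ 4 * (iteratedDeriv k u r) ^ 2) (Set.Ioo 0 R)) →
        ∀ t : ℝ, 0 < t → t ≤ a →
          |iteratedDeriv 1 u t| ≤ c7 * Real.sqrt (T u) * t ^ (-(1/2) : ℝ) := by
      refine ⟨c3 * a ^ ((1:ℝ)/2) + 2 * c6 + 1, by positivity, ?_⟩
      intro u hu hint t ht hta
      have hT := hsqTnn u
      have h1 := habs' u hu 1 t a ht hta haR
      have h2 : |iteratedDeriv 1 u a| ≤ c3 * Real.sqrt (T u) :=
        hDb u hu hint 1 (by omega) a ⟨le_rfl, hab.le⟩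
      have hIm : ∫ s in t..a, |iteratedDeriv 2 u s| ≤
          ∫ s in t..a, c6 * Real.sqrt (T u) * s ^ (-(3/2):ℝ) := by
        apply intervalIntegral.integral_mono_on hta
        · apply ContinuousOn.intervalIntegrable
          rw [Set.uIcc_of_le hta]
          exact ((hcont u hu 2).mono (fun s hs =>
            ⟨lt_of_lt_of_le ht hs.1, lt_of_le_of_lt hs.2 haR⟩)).abs
        · apply ContinuousOn.intervalIntegrable
          rw [Set.uIcc_of_le hta]
          exact continuous_const.continuousOn.mul (continuousOn_id.rpow_const
            (fun s hs => Or.inl (ne_of_gt (lt_of_lt_of_le ht hs.1))))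
        · intro s hs
          exact hstep1 u hu hint s (lt_of_lt_of_le ht hs.1) hs.2
      have hIv : ∫ s in t..a, c6 * Real.sqrt (T u) * s ^ (-(3/2):ℝ) ≤
          c6 * Real.sqrt (T u) * (2 * t ^ (-(1/2):ℝ)) := by
        rw [intervalIntegral.integral_const_mul]
        apply mul_le_mul_of_nonneg_left ?_ (mul_nonneg hc60.le hT)
        rw [integral_rpow_pos ht hta (by norm_num : (-(3/2):ℝ) ≠ -1)]
        have he : (-(3/2):ℝ) + 1 = -(1/2) := by norm_num
        rw [he]
        have ha12 : (0:ℝ) ≤ a ^ (-(1/2):ℝ) := Real.rpow_nonneg ha0.le _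
        have ht12 : (0:ℝ) ≤ t ^ (-(1/2):ℝ) := Real.rpow_nonneg ht.le _
        linarith
      have habsorb : (1:ℝ) ≤ a ^ ((1:ℝ)/2) * t ^ (-(1/2):ℝ) := by
        have h7 : a ^ (-(1/2):ℝ) ≤ t ^ (-(1/2):ℝ) :=
          Real.rpow_le_rpow_of_nonpos ht hta (by norm_num)
        have h8 : a ^ ((1:ℝ)/2) * a ^ (-(1/2):ℝ) = 1 := by
          rw [← Real.rpow_add ha0]; norm_num
        calc (1:ℝ) = a ^ ((1:ℝ)/2) * a ^ (-(1/2):ℝ) := h8.symm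
          _ ≤ a ^ ((1:ℝ)/2) * t ^ (-(1/2):ℝ) :=
              mul_le_mul_of_nonneg_left h7 (Real.rpow_nonneg ha0.le _)
      have ht12 : (0:ℝ) ≤ t ^ (-(1/2):ℝ) := Real.rpow_nonneg ht.le _
      calc |iteratedDeriv 1 u t|
          ≤ c3 * Real.sqrt (T u) + c6 * Real.sqrt (T u) * (2 * t ^ (-(1/2):ℝ)) := by
            linarith [le_trans h1 (add_le_add h2 (le_trans hIm hIv))]
        _ = c3 * Real.sqrt (T u) * 1 + 2 * c6 * Real.sqrt (T u) * t ^ (-(1/2):ℝ) := by ring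
        _ ≤ c3 * Real.sqrt (T u) * (a ^ ((1:ℝ)/2) * t ^ (-(1/2):ℝ)) +
            2 * c6 * Real.sqrt (T u) * t ^ (-(1/2):ℝ) :=
            add_le_add_left (mul_le_mul_of_nonneg_left habsorb
              (mul_nonneg hc30.le hT)) _
        _ = (c3 * a ^ ((1:ℝ)/2) + 2 * c6) * Real.sqrt (T u) * t ^ (-(1/2):ℝ) := by ring
        _ ≤ (c3 * a ^ ((1:ℝ)/2) + 2 * c6 + 1) * Real.sqrt (T u) * t ^ (-(1/2):ℝ) := by
            nlinarith [mul_nonneg hT ht12]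
    refine ⟨c3 + c7 * (2 * a ^ ((1:ℝ)/2)) + 1, by positivity, ?_⟩
    intro u hu hint r hr hra
    have hT := hsqTnn u
    have h1 := habs' u hu 0 r a hr hra haR
    rw [iteratedDeriv_zero] at h1
    have h2 : |iteratedDeriv 0 u a| ≤ c3 * Real.sqrt (T u) :=
      hDb u hu hint 0 (by omega) a ⟨le_rfl, hab.le⟩
    rw [iteratedDeriv_zero] at h2
    have hIm : ∫ s in r..a, |iteratedDeriv 1 u s| ≤
        ∫ s in r..a, c7 * Real.sqrt (T u) * s ^ (-(1/2):ℝ) := by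
      apply intervalIntegral.integral_mono_on hra
      · apply ContinuousOn.intervalIntegrable
        rw [Set.uIcc_of_le hra]
        exact ((hcont u hu 1).mono (fun s hs =>
          ⟨lt_of_lt_of_le hr hs.1, lt_of_le_of_lt hs.2 haR⟩)).abs
      · apply ContinuousOn.intervalIntegrable
        rw [Set.uIcc_of_le hra]
        exact continuous_const.continuousOn.mul (continuousOn_id.rpow_const
          (fun s hs => Or.inl (ne_of_gt (lt_of_lt_of_le hr hs.1))))
      · intro s hs
        exact hstep2 u hu hint s (lt_of_lt_of_le hr hs.1) hs.2
    have hIv : ∫ s in r..a, c7 * Real.sqrt (T u) * s ^ (-(1/2):ℝ) ≤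
        c7 * Real.sqrt (T u) * (2 * a ^ ((1:ℝ)/2)) := by
      rw [intervalIntegral.integral_const_mul]
      apply mul_le_mul_of_nonneg_left ?_ (mul_nonneg hc70.le hT)
      rw [integral_rpow_pos hr hra (by norm_num : (-(1/2):ℝ) ≠ -1)]
      have he : (-(1/2):ℝ) + 1 = 1/2 := by norm_num
      rw [he]
      have hr12 : (0:ℝ) ≤ r ^ ((1:ℝ)/2) := Real.rpow_nonneg hr.le _
      have ha12 : (0:ℝ) ≤ a ^ ((1:ℝ)/2) := Real.rpow_nonneg ha0.le _
      rw [show ((1:ℝ)/2 : ℝ) = (1/2 : ℝ) by norm_num] at *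
      linarith
    calc |u r| ≤ c3 * Real.sqrt (T u) + c7 * Real.sqrt (T u) * (2 * a ^ ((1:ℝ)/2)) := by
          linarith [le_trans h1 (add_le_add h2 (le_trans hIm hIv))]
      _ = (c3 + c7 * (2 * a ^ ((1:ℝ)/2))) * Real.sqrt (T u) := by ring
      _ ≤ (c3 + c7 * (2 * a ^ ((1:ℝ)/2)) + 1) * Real.sqrt (T u) := by nlinarith [hT]
  have hP : ∀ d j : ℕ, j + d = N + 1 → 1 ≤ j → ∃ D : ℝ, 0 < D ∧
      ∀ u : ℝ → ℝ, ContDiffOn ℝ (⊤ : ℕ∞) u (Set.Ioo 0 R) →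
      (∀ k ≤ N + 2, MeasureTheory.IntegrableOn
          (fun r => w r ^ (β + k) * r ^ 4 * (iteratedDeriv k u r) ^ 2) (Set.Ioo 0 R)) →
      ∀ r : ℝ, b ≤ r → r < R →
        |iteratedDeriv j u r| ≤ D * Real.sqrt (T u) * (R - r) ^ (-((j:ℝ) - 1 + θ)) := by
    have hRb : (0:ℝ) < R - b := by linarith
    have haux : ∀ γ : ℝ, 0 ≤ γ → ∀ r : ℝ, b ≤ r → r < R →
        1 ≤ (R - b) ^ γ * (R - r) ^ (-γ) := by
      intro γ hγ r hbr hrR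
      have hRr : 0 < R - r := by linarith
      have h1 : (R - b) ^ (-γ) ≤ (R - r) ^ (-γ) :=
        Real.rpow_le_rpow_of_nonpos hRr (by linarith) (by linarith)
      have h2 : (R - b) ^ γ * (R - b) ^ (-γ) = 1 := by
        rw [← Real.rpow_add hRb]; simp
      calc (1:ℝ) = (R-b)^γ * (R-b)^(-γ) := h2.symm
        _ ≤ (R-b)^γ * (R-r)^(-γ) :=
            mul_le_mul_of_nonneg_left h1 (Real.rpow_nonneg hRb.le _)
    have hN0 : (0:ℝ) ≤ (N:ℝ) := Nat.cast_nonneg N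
    have hβN1 : (0:ℝ) < β + (N:ℝ) + 1 := by linarith
    have hGR : ∀ r : ℝ, b ≤ r → r < R →
        ∫ s in b..r, w s ^ (-(β + ((N+2:ℕ):ℝ))) * s ^ (-4:ℝ) ≤
          (m ^ (-(β + ((N:ℝ)+2))) * b ^ (-4:ℝ) / (β + (N:ℝ) + 1)) *
            (R - r) ^ (-(β + (N:ℝ) + 1)) := by
      intro r hbr hrR
      have hsub : Set.Icc b r ⊆ Set.Ioo 0 R :=
        fun s hs => ⟨lt_of_lt_of_le hb0 hs.1, lt_of_le_of_lt hs.2 hrR⟩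
      have hconst0 : (0:ℝ) ≤ m ^ (-(β+((N:ℝ)+2))) * b ^ (-4:ℝ) :=
        mul_nonneg (Real.rpow_nonneg hm0.le _) (Real.rpow_nonneg hb0.le _)
      have hpt : ∀ s ∈ Set.Icc b r, w s ^ (-(β + ((N+2:ℕ):ℝ))) * s ^ (-4:ℝ) ≤
          (m ^ (-(β+((N:ℝ)+2))) * b ^ (-4:ℝ)) * (R - s) ^ (-(β+((N:ℝ)+2))) := by
        intro s hs
        have hsR : s < R := lt_of_le_of_lt hs.2 hrR
        have hRs : 0 < R - s := by linarith
        have hs0 : 0 < s := lt_of_lt_of_le hb0 hs.1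
        have hwls : m * (R - s) ≤ w s := hmlin s hs.1 hsR
        have hcast : ((N+2:ℕ):ℝ) = (N:ℝ) + 2 := by push_cast; ring
        have h1 : w s ^ (-(β + ((N+2:ℕ):ℝ))) ≤ (m * (R - s)) ^ (-(β+((N:ℝ)+2))) := by
          rw [hcast]
          exact Real.rpow_le_rpow_of_nonpos (by positivity) hwls (by linarith)
        have h2 : (m * (R-s)) ^ (-(β+((N:ℝ)+2))) =
            m ^ (-(β+((N:ℝ)+2))) * (R-s) ^ (-(β+((N:ℝ)+2))) :=
          Real.mul_rpow hm0.le hRs.le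
        have h3 : s ^ (-4:ℝ) ≤ b ^ (-4:ℝ) :=
          Real.rpow_le_rpow_of_nonpos hb0 hs.1 (by norm_num)
        calc w s ^ (-(β + ((N+2:ℕ):ℝ))) * s ^ (-4:ℝ)
            ≤ (m * (R-s)) ^ (-(β+((N:ℝ)+2))) * b ^ (-4:ℝ) :=
              mul_le_mul h1 h3 (Real.rpow_nonneg hs0.le _)
                (Real.rpow_nonneg (by positivity) _)
          _ = (m ^ (-(β+((N:ℝ)+2))) * b ^ (-4:ℝ)) * (R - s) ^ (-(β+((N:ℝ)+2))) := by
              rw [h2]; ring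
      have hII1 : IntervalIntegrable
          (fun s => w s ^ (-(β + ((N+2:ℕ):ℝ))) * s ^ (-4:ℝ)) volume b r := by
        apply ContinuousOn.intervalIntegrable
        rw [Set.uIcc_of_le hbr]
        exact ((hw_cont.mono (fun s hs => ⟨(hsub hs).1.le, (hsub hs).2.le⟩)).rpow_const
          (fun s hs => Or.inl (ne_of_gt (hw_pos s (hsub hs).1.le (hsub hs).2)))).mul
          (continuousOn_id.rpow_const (fun s hs => Or.inl (ne_of_gt (hsub hs).1)))
      have hII2 : IntervalIntegrable (fun s => (m ^ (-(β+((N:ℝ)+2))) * b ^ (-4:ℝ)) *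
          (R - s) ^ (-(β+((N:ℝ)+2)))) volume b r := by
        apply ContinuousOn.intervalIntegrable
        rw [Set.uIcc_of_le hbr]
        exact continuous_const.continuousOn.mul
          (((continuous_const.sub continuous_id).continuousOn).rpow_const
            (fun s hs => Or.inl (ne_of_gt (sub_pos.2 (lt_of_le_of_lt hs.2 hrR)))))
      have h4 := intervalIntegral.integral_mono_on hbr hII1 hII2 hpt
      rw [intervalIntegral.integral_const_mul] at h4
      have h5 : ∫ s in b..r, (R - s) ^ (-(β+((N:ℝ)+2))) ≤
          (R - r) ^ (-(β+(N:ℝ)+1)) / (β+(N:ℝ)+1) := by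
        rw [integral_rpow_sub hbr hrR
          (by intro hcon; nlinarith : -(β+((N:ℝ)+2)) ≠ -1)]
        have he : -(β+((N:ℝ)+2)) + 1 = -(β+(N:ℝ)+1) := by ring
        rw [he]
        have hA : (0:ℝ) ≤ (R-b) ^ (-(β+(N:ℝ)+1)) := Real.rpow_nonneg hRb.le _
        have hB : (0:ℝ) ≤ (R-r) ^ (-(β+(N:ℝ)+1)) := Real.rpow_nonneg (by linarith) _
        rw [show ((R-b) ^ (-(β+(N:ℝ)+1)) - (R-r) ^ (-(β+(N:ℝ)+1))) / (-(β+(N:ℝ)+1))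
            = ((R-r) ^ (-(β+(N:ℝ)+1)) - (R-b) ^ (-(β+(N:ℝ)+1))) / (β+(N:ℝ)+1) from by
          rw [div_neg, ← neg_div, neg_sub]]
        exact (div_le_div_iff_of_pos_right hβN1).2 (by linarith)
      calc ∫ s in b..r, w s ^ (-(β + ((N+2:ℕ):ℝ))) * s ^ (-4:ℝ)
          ≤ (m ^ (-(β+((N:ℝ)+2))) * b ^ (-4:ℝ)) *
            ∫ s in b..r, (R - s) ^ (-(β+((N:ℝ)+2))) := h4
        _ ≤ (m ^ (-(β+((N:ℝ)+2))) * b ^ (-4:ℝ)) *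
            ((R - r) ^ (-(β+(N:ℝ)+1)) / (β+(N:ℝ)+1)) :=
            mul_le_mul_of_nonneg_left h5 hconst0
        _ = (m ^ (-(β + ((N:ℝ)+2))) * b ^ (-4:ℝ) / (β + (N:ℝ) + 1)) *
            (R - r) ^ (-(β + (N:ℝ) + 1)) := by ring
    intro d
    induction d with
    | zero =>
      intro j hj h1j
      have hjN : j = N + 1 := by omega
      subst hjN
      set γ : ℝ := ((N:ℝ)+1) - 1 + θ with hγ
      have hγval : γ = (β + (N:ℝ) + 1)/2 := by rw [hγ, hθdef]; ring
      have hγ0 : 0 ≤ γ := by rw [hγval]; linarith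
      set K : ℝ := Real.sqrt (m ^ (-(β + ((N:ℝ)+2))) * b ^ (-4:ℝ) / (β + (N:ℝ) + 1))
        with hK
      have hK0 : 0 ≤ K := Real.sqrt_nonneg _
      have hcRb : 0 ≤ c3 * (R-b)^γ := mul_nonneg hc30.le (Real.rpow_nonneg hRb.le _)
      refine ⟨c3 * (R - b) ^ γ + K + 1, by linarith, ?_⟩
      intro u hu hint r hbr hrR
      have hT := hsqTnn u
      have hRr : 0 < R - r := by linarith
      have hX0 : (0:ℝ) ≤ (R - r) ^ (-γ) := Real.rpow_nonneg hRr.le _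
      have h1 := habs u hu (N+1) b r hb0 hbr hrR
      have h2 : |iteratedDeriv (N+1) u b| ≤ c3 * Real.sqrt (T u) :=
        hDb u hu hint (N+1) (by omega) b ⟨hab.le, le_rfl⟩
      have h3 := hCS u hu hint (N+2) (by omega) b r hb0 hbr hrR
      have h5 : Real.sqrt (∫ s in b..r, w s ^ (-(β + ((N+2:ℕ):ℝ))) * s ^ (-4:ℝ)) ≤
          K * (R - r) ^ (-γ) := by
        refine le_trans (Real.sqrt_le_sqrt (hGR r hbr hrR)) ?_
        rw [Real.sqrt_mul (by positivity) _, hK]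
        have h6 : Real.sqrt ((R - r) ^ (-(β + (N:ℝ) + 1))) = (R - r) ^ (-γ) := by
          rw [Real.sqrt_eq_rpow, ← Real.rpow_mul hRr.le]
          congr 1
          rw [hγval]
          try ring
        rw [h6]
      have hexp : -((((N+1:ℕ)):ℝ) - 1 + θ) = -γ := by
        push_cast
        rw [hγ]
        try ring
      rw [hexp]
      have habs1 : c3 * Real.sqrt (T u) ≤
          c3 * (R-b)^γ * Real.sqrt (T u) * (R - r)^(-γ) := by
        have h7 := haux γ hγ0 r hbr hrR
        calc c3 * Real.sqrt (T u) = c3 * Real.sqrt (T u) * 1 := by ring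
          _ ≤ c3 * Real.sqrt (T u) * ((R-b)^γ * (R-r)^(-γ)) :=
              mul_le_mul_of_nonneg_left h7 (mul_nonneg hc30.le hT)
          _ = c3 * (R-b)^γ * Real.sqrt (T u) * (R - r)^(-γ) := by ring
      have h8 : |iteratedDeriv (N+1) u r| ≤
          c3 * Real.sqrt (T u) + Real.sqrt (T u) * (K * (R-r)^(-γ)) := by
        have h9 := mul_le_mul_of_nonneg_left h5 hT
        linarith [le_trans h1 (add_le_add h2 (le_trans h3 h9))]
      nlinarith [habs1, mul_nonneg hT hX0]
    | succ d ih =>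
      intro j hj h1j
      obtain ⟨D, hD0, hind⟩ := ih (j+1) (by omega) (by omega)
      have hj1 : (1:ℝ) ≤ (j:ℝ) := by exact_mod_cast h1j
      set γ : ℝ := (j:ℝ) - 1 + θ with hγ
      have hγ0 : 0 ≤ γ := by rw [hγ]; linarith
      have hγpos : 0 < γ := by rw [hγ]; linarith
      have hDγ : 0 ≤ D / γ := (div_pos hD0 hγpos).le
      have hcRb : 0 ≤ c3 * (R-b)^γ := mul_nonneg hc30.le (Real.rpow_nonneg hRb.le _)
      refine ⟨c3 * (R-b)^γ + D / γ + 1, by linarith, ?_⟩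
      intro u hu hint r hbr hrR
      have hT := hsqTnn u
      have hRr : 0 < R - r := by linarith
      have hX0 : (0:ℝ) ≤ (R - r) ^ (-γ) := Real.rpow_nonneg hRr.le _
      have h1 := habs u hu j b r hb0 hbr hrR
      have h2 : |iteratedDeriv j u b| ≤ c3 * Real.sqrt (T u) :=
        hDb u hu hint j (by omega) b ⟨hab.le, le_rfl⟩
      have hpt : ∀ s ∈ Set.Icc b r, |iteratedDeriv (j+1) u s| ≤
          D * Real.sqrt (T u) * (R - s) ^ (-((j:ℝ) + θ)) := by
        intro s hs
        have h := hind u hu hint s hs.1 (lt_of_le_of_lt hs.2 hrR)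
        have hce : -((((j+1:ℕ)):ℝ) - 1 + θ) = -((j:ℝ) + θ) := by push_cast; ring
        rwa [hce] at h
      have hIm : ∫ s in b..r, |iteratedDeriv (j+1) u s| ≤
          ∫ s in b..r, D * Real.sqrt (T u) * (R - s) ^ (-((j:ℝ) + θ)) := by
        apply intervalIntegral.integral_mono_on hbr
        · apply ContinuousOn.intervalIntegrable
          rw [Set.uIcc_of_le hbr]
          exact ((hcont u hu (j+1)).mono (fun s hs =>
            ⟨lt_of_lt_of_le hb0 hs.1, lt_of_le_of_lt hs.2 hrR⟩)).abs
        · apply ContinuousOn.intervalIntegrable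
          rw [Set.uIcc_of_le hbr]
          exact continuous_const.continuousOn.mul
            (((continuous_const.sub continuous_id).continuousOn).rpow_const
              (fun s hs => Or.inl (ne_of_gt (sub_pos.2 (lt_of_le_of_lt hs.2 hrR)))))
        · exact hpt
      have hIv : ∫ s in b..r, D * Real.sqrt (T u) * (R - s) ^ (-((j:ℝ) + θ)) ≤
          D * Real.sqrt (T u) * ((R - r) ^ (-γ) / γ) := by
        rw [intervalIntegral.integral_const_mul]
        apply mul_le_mul_of_nonneg_left ?_ (mul_nonneg hD0.le hT)
        rw [integral_rpow_sub hbr hrR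
          (by intro hcon; rw [neg_eq_iff_eq_neg] at hcon; nlinarith : -((j:ℝ)+θ) ≠ -1)]
        have he : -((j:ℝ)+θ) + 1 = -γ := by rw [hγ]; ring
        rw [he]
        have hA : (0:ℝ) ≤ (R-b) ^ (-γ) := Real.rpow_nonneg hRb.le _
        rw [show ((R-b) ^ (-γ) - (R-r) ^ (-γ)) / (-γ)
            = ((R-r) ^ (-γ) - (R-b) ^ (-γ)) / γ from by
          rw [div_neg, ← neg_div, neg_sub]]
        exact (div_le_div_iff_of_pos_right hγpos).2 (by linarith)
      have habs1 : c3 * Real.sqrt (T u) ≤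
          c3 * (R-b)^γ * Real.sqrt (T u) * (R - r)^(-γ) := by
        have h7 := haux γ hγ0 r hbr hrR
        calc c3 * Real.sqrt (T u) = c3 * Real.sqrt (T u) * 1 := by ring
          _ ≤ c3 * Real.sqrt (T u) * ((R-b)^γ * (R-r)^(-γ)) :=
              mul_le_mul_of_nonneg_left h7 (mul_nonneg hc30.le hT)
          _ = c3 * (R-b)^γ * Real.sqrt (T u) * (R - r)^(-γ) := by ring
      have h8 : |iteratedDeriv j u r| ≤ c3 * Real.sqrt (T u) +
          D * Real.sqrt (T u) * ((R - r) ^ (-γ) / γ) :=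
        le_trans h1 (add_le_add h2 (le_trans hIm hIv))
      have h9 : D * Real.sqrt (T u) * ((R - r) ^ (-γ) / γ) =
          (D / γ) * Real.sqrt (T u) * (R - r) ^ (-γ) := by
        field_simp
      rw [h9] at h8
      nlinarith [habs1, mul_nonneg hT hX0]
  obtain ⟨c4, hc40, hNearR⟩ : ∃ c4 : ℝ, 0 < c4 ∧ ∀ u : ℝ → ℝ, ContDiffOn ℝ (⊤ : ℕ∞) u (Set.Ioo 0 R) →
      (∀ k ≤ N + 2, MeasureTheory.IntegrableOn
          (fun r => w r ^ (β + k) * r ^ 4 * (iteratedDeriv k u r) ^ 2) (Set.Ioo 0 R)) →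
      ∀ r : ℝ, b ≤ r → r < R → |u r| ≤ c4 * Real.sqrt (T u) := by
    obtain ⟨D, hD0, h1bd⟩ := hP N 1 (by omega) le_rfl
    have hRb : (0:ℝ) < R - b := by linarith
    have h1θ : (0:ℝ) < 1 - θ := by linarith
    have hcst0 : 0 ≤ D * ((R-b) ^ (1-θ) / (1-θ)) :=
      mul_nonneg hD0.le (div_nonneg (Real.rpow_nonneg hRb.le _) h1θ.le)
    refine ⟨c3 + D * ((R-b) ^ (1-θ) / (1-θ)) + 1, by linarith, ?_⟩
    intro u hu hint r hbr hrR
    have hT := hsqTnn u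
    have h1 := habs u hu 0 b r hb0 hbr hrR
    rw [iteratedDeriv_zero] at h1
    have h2 : |iteratedDeriv 0 u b| ≤ c3 * Real.sqrt (T u) :=
      hDb u hu hint 0 (by omega) b ⟨hab.le, le_rfl⟩
    rw [iteratedDeriv_zero] at h2
    have hpt : ∀ s ∈ Set.Icc b r, |iteratedDeriv 1 u s| ≤
        D * Real.sqrt (T u) * (R - s) ^ (-θ) := by
      intro s hs
      have h := h1bd u hu hint s hs.1 (lt_of_le_of_lt hs.2 hrR)
      have hce : -((((1:ℕ)):ℝ) - 1 + θ) = -θ := by push_cast; ring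
      rwa [hce] at h
    have hIm : ∫ s in b..r, |iteratedDeriv 1 u s| ≤
        ∫ s in b..r, D * Real.sqrt (T u) * (R - s) ^ (-θ) := by
      apply intervalIntegral.integral_mono_on hbr
      · apply ContinuousOn.intervalIntegrable
        rw [Set.uIcc_of_le hbr]
        exact ((hcont u hu 1).mono (fun s hs =>
          ⟨lt_of_lt_of_le hb0 hs.1, lt_of_le_of_lt hs.2 hrR⟩)).abs
      · apply ContinuousOn.intervalIntegrable
        rw [Set.uIcc_of_le hbr]
        exact continuous_const.continuousOn.mul
          (((continuous_const.sub continuous_id).continuousOn).rpow_const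
            (fun s hs => Or.inl (ne_of_gt (sub_pos.2 (lt_of_le_of_lt hs.2 hrR)))))
      · exact hpt
    have hIv : ∫ s in b..r, D * Real.sqrt (T u) * (R - s) ^ (-θ) ≤
        D * Real.sqrt (T u) * ((R-b) ^ (1-θ) / (1-θ)) := by
      rw [intervalIntegral.integral_const_mul]
      apply mul_le_mul_of_nonneg_left ?_ (mul_nonneg hD0.le hT)
      rw [integral_rpow_sub hbr hrR (by intro hcon; nlinarith : (-θ:ℝ) ≠ -1)]
      have he : (-θ:ℝ) + 1 = 1 - θ := by ring
      rw [he]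
      have hB : (0:ℝ) ≤ (R-r) ^ (1-θ) := Real.rpow_nonneg (by linarith) _
      exact (div_le_div_iff_of_pos_right h1θ).2 (by linarith)
    calc |u r| ≤ c3 * Real.sqrt (T u) +
          D * Real.sqrt (T u) * ((R-b) ^ (1-θ) / (1-θ)) :=
        le_trans h1 (add_le_add h2 (le_trans hIm hIv))
      _ ≤ (c3 + D * ((R-b) ^ (1-θ) / (1-θ)) + 1) * Real.sqrt (T u) := by nlinarith [hT]
  -- final assembly
  refine ⟨(max c5 (max c3 c4))^2 + 1, by positivity, ?_⟩
  intro u hu hint r hr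
  have hM : |u r| ≤ (max c5 (max c3 c4)) * Real.sqrt (T u) := by
    rcases le_or_gt r a with h1 | h1
    · exact le_trans (hNear0 u hu hint r hr.1 h1)
        (mul_le_mul_of_nonneg_right (le_max_left _ _) (hsqTnn u))
    · rcases le_or_gt r b with h2 | h2
      · have h3 := hDb u hu hint 0 (by omega) r ⟨h1.le, h2⟩
        rw [iteratedDeriv_zero] at h3
        exact le_trans h3 (mul_le_mul_of_nonneg_right
          (le_trans (le_max_left _ _) (le_max_right _ _)) (hsqTnn u))
      · exact le_trans (hNearR u hu hint r h2.le hr.2)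
          (mul_le_mul_of_nonneg_right
          (le_trans (le_max_right _ _) (le_max_right _ _)) (hsqTnn u))
  have hM0 : (0:ℝ) ≤ max c5 (max c3 c4) := le_trans hc50.le (le_max_left _ _)
  have h2 : (u r)^2 ≤ (max c5 (max c3 c4))^2 * T u := by
    have := mul_self_le_mul_self (abs_nonneg (u r)) hM
    calc (u r)^2 = |u r| * |u r| := by rw [← sq_abs]; ring
      _ ≤ ((max c5 (max c3 c4)) * Real.sqrt (T u)) * ((max c5 (max c3 c4)) * Real.sqrt (T u)) :=
          this
      _ = (max c5 (max c3 c4))^2 * (Real.sqrt (T u) * Real.sqrt (T u)) := by ring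
      _ = (max c5 (max c3 c4))^2 * T u := by rw [Real.mul_self_sqrt (hTnn u)]
  calc (u r)^2 ≤ (max c5 (max c3 c4))^2 * T u := h2
    _ ≤ ((max c5 (max c3 c4))^2 + 1) * T u := by nlinarith [hTnn u]
    _ = _ := by rw [hTdef]
end
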